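/- Every C-set near zero in ℝ⁺ is a J-set near zero in ℝ⁺, and moreover every member of an idempotent ultrafilter p ∈ J₀(ℝ⁺) witnessing that C is a C-set near zero is a J-set near zero; consequently, if M is a u × v real matrix that is image partition regular over ℝ⁺ and C is a C-set near zero in ℝ⁺, then {x ∈ (ℝ⁺)ᵛ : Mx ∈ Cᵘ} is a J-set near zero in (ℝ⁺)ᵛ. -/

import Mathlib

open Filter Set

attribute [local instance] Ultrafilter.add Ultrafilter.addSemigroup

/-- The finite sums `FS((b(n))ₙ) = {∑_{n∈H} b(n) : H ⊆ ℕ finite nonempty}`. -/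
def FS {α : Type*} [AddCommMonoid α] (b : ℕ → α) : Set α :=
  {y | ∃ H : Finset ℕ, H.Nonempty ∧ y = ∑ t ∈ H, b t}

/-- `C ⊆ ℝ⁺` is a J-set near zero: for every finite set of positive sequences converging to `0`
and every `δ > 0`, there exist `a ∈ (0,δ)` and a finite nonempty `H ⊆ ℕ` with
`a + ∑_{t∈H} f(t) ∈ C` for every `f` in the family. -/
def JSetNearZero (C : Set ℝ) : Prop :=
  ∀ F : Finset (ℕ → ℝ),
    (∀ f ∈ F, (∀ n, 0 < f n) ∧ Tendsto f atTop (nhds 0)) →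
    ∀ δ : ℝ, 0 < δ →
      ∃ a ∈ Set.Ioo (0:ℝ) δ, ∃ H : Finset ℕ, H.Nonempty ∧
        ∀ f ∈ F, a + ∑ t ∈ H, f t ∈ C

/-- `E ⊆ (ℝ⁺)ᵛ` is a J-set near zero. -/
def JSetNearZeroV (v : ℕ) (E : Set (Fin v → ℝ)) : Prop :=
  ∀ F : Finset (ℕ → Fin v → ℝ),
    (∀ f ∈ F, (∀ n i, 0 < f n i) ∧ ∀ i, Tendsto (fun n => f n i) atTop (nhds 0)) →
    ∀ δ : ℝ, 0 < δ →
      ∃ a : Fin v → ℝ, (∀ i, a i ∈ Set.Ioo (0:ℝ) δ) ∧ ∃ H : Finset ℕ, H.Nonempty ∧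
        ∀ f ∈ F, a + ∑ t ∈ H, f t ∈ E

/-- `C ⊆ ℝ⁺` is a C-set near zero: `C` belongs to some idempotent ultrafilter `p ∈ 0⁺(ℝ⁺)` all
of whose members are J-sets near zero (i.e. `p ∈ J₀(ℝ⁺)`). -/
def CSetNearZero (C : Set ℝ) : Prop :=
  ∃ p : Ultrafilter ℝ, p + p = p ∧ (∀ ε : ℝ, 0 < ε → Set.Ioo 0 ε ∈ p) ∧ C ∈ p ∧
    ∀ A ∈ p, JSetNearZero A

/-- `E ⊆ (ℝ⁺)ᵛ` is a C-set near zero: there is an idempotent in `cl(E) ∩ J₀((ℝ⁺)ᵛ)`. -/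
def CSetNearZeroV (v : ℕ) (E : Set (Fin v → ℝ)) : Prop :=
  ∃ p : Ultrafilter (Fin v → ℝ), p + p = p ∧
    (∀ ε : ℝ, 0 < ε → {x : Fin v → ℝ | ∀ i, 0 < x i ∧ x i < ε} ∈ p) ∧ E ∈ p ∧
    ∀ A ∈ p, JSetNearZeroV v A

/-- `U ⊆ (ℝ⁺)ᵈ` is a weak IP-set near zero: it contains `FS` of a sequence in `(ℝ⁺)ᵈ`
converging to zero. -/
def WeakIPNearZero (d : ℕ) (U : Set (Fin d → ℝ)) : Prop :=
  ∃ b : ℕ → Fin d → ℝ, (∀ n i, 0 < b n i) ∧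
    (∀ i, Tendsto (fun n => b n i) atTop (nhds 0)) ∧ FS b ⊆ U

/-- `M` is image partition regular over `ℝ⁺`: for every finite coloring of `ℝ⁺` there is
`x ∈ (ℝ⁺)ᵛ` with all entries of `Mx` in `ℝ⁺` and monochromatic. -/
def IPR (u v : ℕ) (M : Matrix (Fin u) (Fin v) ℝ) : Prop :=
  ∀ r : ℕ, 0 < r → ∀ c : ℝ → Fin r,
    ∃ x : Fin v → ℝ, (∀ j, 0 < x j) ∧ (∀ i, 0 < M.mulVec x i) ∧
      ∃ k : Fin r, ∀ i, c (M.mulVec x i) = k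

/-- `M` is image partition regular over `ℝ⁺` near zero: for every finite coloring of `ℝ⁺` and
every `δ > 0` there is `x ∈ (ℝ⁺)ᵛ` with the entries of `Mx` monochromatic and in `(0,δ)`. -/
def IPRNearZero (u v : ℕ) (M : Matrix (Fin u) (Fin v) ℝ) : Prop :=
  ∀ r : ℕ, 0 < r → ∀ c : ℝ → Fin r, ∀ δ : ℝ, 0 < δ →
    ∃ x : Fin v → ℝ, (∀ j, 0 < x j) ∧ (∀ i, M.mulVec x i ∈ Set.Ioo 0 δ) ∧
      ∃ k : Fin r, ∀ i, c (M.mulVec x i) = k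

/-- `B` is a first entries matrix: no row is zero, the first nonzero entry of each row is
positive, and first nonzero entries occurring in the same column are equal. -/
def FirstEntriesMatrix {u m : ℕ} (B : Matrix (Fin u) (Fin m) ℝ) : Prop :=
  (∀ i, ∃ j, B i j ≠ 0) ∧
  (∀ i j, (∀ k, k < j → B i k = 0) → B i j ≠ 0 → 0 < B i j) ∧
  (∀ i i' j, (∀ k, k < j → B i k = 0) → (∀ k, k < j → B i' k = 0) →
    B i j ≠ 0 → B i' j ≠ 0 → B i j = B i' j)

namespace CJ
noncomputable section
open Classical Topology

def FE {ι : Type} {m : ℕ} (B : Matrix ι (Fin m) ℝ) : Prop :=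
  (∀ i, ∃ j, B i j ≠ 0) ∧
  (∀ i j, (∀ k, k < j → B i k = 0) → B i j ≠ 0 → 0 < B i j) ∧
  (∀ i i' j, (∀ k, k < j → B i k = 0) → (∀ k, k < j → B i' k = 0) →
    B i j ≠ 0 → B i' j ≠ 0 → B i j = B i' j)

theorem mulVec_apply {ι ι' : Type} [Fintype ι'] (M : Matrix ι ι' ℝ) (y : ι' → ℝ) (i : ι) :
    M.mulVec y i = ∑ l, M i l * y l := rfl



/-- the star set of an idempotent -/
def star (p : Ultrafilter ℝ) (A : Set ℝ) : Set ℝ :=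
  {x | x ∈ A ∧ {y | x + y ∈ A} ∈ p}

theorem mem_add_iff {p q : Ultrafilter ℝ} {A : Set ℝ} :
    A ∈ p + q ↔ {x | {y | x + y ∈ A} ∈ q} ∈ p := by
  have := Ultrafilter.eventually_add p q (· ∈ A)
  simpa [Filter.Eventually] using this

theorem star_mem {p : Ultrafilter ℝ} (hp : p + p = p) {A : Set ℝ} (hA : A ∈ p) :
    star p A ∈ p := by
  have h2 : {x | {y | x + y ∈ A} ∈ p} ∈ p := by
    rw [← mem_add_iff, hp]; exact hA
  exact Filter.inter_mem hA h2

theorem star_shift {p : Ultrafilter ℝ} (hp : p + p = p) {A : Set ℝ} (hA : A ∈ p)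
    {x : ℝ} (hx : x ∈ star p A) : {y | x + y ∈ star p A} ∈ p := by
  obtain ⟨hxA, hT⟩ := hx
  have h2 : {y | {z | (x + y) + z ∈ A} ∈ p} ∈ p := by
    have : {y | x + y ∈ A} ∈ p + p := by rw [hp]; exact hT
    rw [mem_add_iff] at this
    convert this using 2 with y
    simp [add_assoc]
  have := Filter.inter_mem hT h2
  refine Filter.mem_of_superset this ?_
  rintro y ⟨hy1, hy2⟩
  exact ⟨hy1, hy2⟩

theorem star_subset {p : Ultrafilter ℝ} {A : Set ℝ} : star p A ⊆ A := fun _ h => h.1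

/-- scalar signed J-property -/
theorem L0 {p : Ultrafilter ℝ} (hp0 : ∀ ε : ℝ, 0 < ε → Set.Ioo 0 ε ∈ p)
    (hpJ : ∀ A ∈ p, JSetNearZero A) {A : Set ℝ} (hA : A ∈ p) {ε : ℝ} (hε : 0 < ε)
    (gs : Finset (ℕ → ℝ)) (hgs : ∀ g ∈ gs, Tendsto g atTop (nhds 0)) :
    ∃ a ∈ A ∩ Set.Ioo 0 ε, ∃ H : Finset ℕ, H.Nonempty ∧
      ∀ g ∈ gs, a + ∑ t ∈ H, g t ∈ A ∩ Set.Ioo 0 ε := by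
  set A' : Set ℝ := A ∩ Set.Ioo 0 ε with hA'
  have hA'p : A' ∈ p := Filter.inter_mem hA (hp0 ε hε)
  have hJ : JSetNearZero A' := hpJ A' hA'p
  set d : ℕ → ℝ := fun t => (∑ g ∈ gs, |g t|) + (1/2)^t with hd
  have hdpos : ∀ t, 0 < d t := by
    intro t
    have h1 : (0:ℝ) ≤ ∑ g ∈ gs, |g t| :=
      Finset.sum_nonneg fun g _ => abs_nonneg _
    have h2 : (0:ℝ) < (1/2)^t := by positivity
    simp only [hd]; linarith
  have hdnull : Tendsto d atTop (nhds 0) := by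
    have h1 : Tendsto (fun t => ∑ g ∈ gs, |g t|) atTop (nhds 0) := by
      have := tendsto_finset_sum gs (fun g hg => (hgs g hg).abs)
      simpa using this
    have h2 : Tendsto (fun t : ℕ => ((1:ℝ)/2)^t) atTop (nhds 0) :=
      tendsto_pow_atTop_nhds_zero_of_lt_one (by norm_num) (by norm_num)
    have := h1.add h2
    simpa only [hd, add_zero, one_div] using this
  set F : Finset (ℕ → ℝ) := insert d (gs.image (fun g => d + g)) with hF
  have hFh : ∀ f ∈ F, (∀ n, 0 < f n) ∧ Tendsto f atTop (nhds 0) := by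
    intro f hf
    rcases Finset.mem_insert.mp hf with rfl | hf
    · exact ⟨hdpos, hdnull⟩
    · obtain ⟨g, hg, rfl⟩ := Finset.mem_image.mp hf
      constructor
      · intro t
        have h1 : |g t| ≤ ∑ g' ∈ gs, |g' t| :=
          Finset.single_le_sum (fun g' _ => abs_nonneg (g' t)) hg
        have h2 : (0:ℝ) < (1/2)^t := by positivity
        have h3 : -(g t) ≤ |g t| := neg_le_abs _
        simp only [hd, Pi.add_apply]
        linarith
      · have := hdnull.add (hgs g hg); rw [add_zero] at this; exact this
  obtain ⟨a₀, ha₀, H, hHne, hmem⟩ := hJ F hFh ε hε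
  refine ⟨a₀ + ∑ t ∈ H, d t, ?_, H, hHne, ?_⟩
  · exact hmem d (Finset.mem_insert_self _ _)
  · intro g hg
    have := hmem (d + g) (Finset.mem_insert_of_mem (Finset.mem_image_of_mem _ hg))
    have heq : a₀ + ∑ t ∈ H, (d + g) t = (a₀ + ∑ t ∈ H, d t) + ∑ t ∈ H, g t := by
      simp only [Pi.add_apply, Finset.sum_add_distrib]; ring
    rwa [heq] at this

/-- every conic combination admits one with independent support -/
theorem indep_rep {ι : Type} [Fintype ι] {v : ℕ} (c : Fin v → (ι → ℝ)) :
    ∀ (N : ℕ) (x : Fin v → ℝ), (Finset.univ.filter (fun l => x l ≠ 0)).card ≤ N →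
    (∀ l, 0 ≤ x l) →
    ∃ x' : Fin v → ℝ, (∀ l, 0 ≤ x' l) ∧ (∑ l, x' l • c l) = (∑ l, x l • c l) ∧
      LinearIndependent ℝ (fun l : {l // x' l ≠ 0} => c l.1) := by
  intro N
  induction N with
  | zero =>
    intro x hcard hx
    refine ⟨x, hx, rfl, ?_⟩
    have : ∀ l, x l = 0 := by
      intro l
      by_contra h
      have : l ∈ Finset.univ.filter (fun l => x l ≠ 0) := by simp [h]
      have := Finset.card_pos.mpr ⟨l, this⟩
      omega
    have : IsEmpty {l // x l ≠ 0} := ⟨fun ⟨l, hl⟩ => hl (this l)⟩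
    exact linearIndependent_empty_type
  | succ N ih =>
    intro x hcard hx
    by_cases hli : LinearIndependent ℝ (fun l : {l // x l ≠ 0} => c l.1)
    · exact ⟨x, hx, rfl, hli⟩
    · -- get a signed relation supported in supp x with a positive entry
      obtain ⟨g, hgsum, i₀, hgi₀⟩ := Fintype.not_linearIndependent_iff.mp hli
      set d : Fin v → ℝ := fun l => if h : x l ≠ 0 then g ⟨l, h⟩ else 0 with hd
      have hdsupp : ∀ l, d l ≠ 0 → x l ≠ 0 := by
        intro l hl
        by_contra h
        apply hl
        simp [hd, h]
      have hdsum : (∑ l, d l • c l) = 0 := by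
        have h1 : (∑ l, d l • c l) = ∑ l ∈ Finset.univ.filter (fun l => x l ≠ 0), d l • c l := by
          rw [Finset.sum_filter_of_ne]
          intro l _ h
          by_contra h2
          exact h (by simp [hd, h2])
        have h2 : ∑ l ∈ Finset.univ.filter (fun l => x l ≠ 0), d l • c l
            = ∑ l : {l // x l ≠ 0}, d l.1 • c l.1 :=
          Finset.sum_subtype (p := fun l => x l ≠ 0) _ (by simp) (fun l => d l • c l)
        rw [h1, h2, ← hgsum]
        apply Finset.sum_congr rfl
        intro l _
        congr 1
        simp [hd, l.2]
      have hdne : ∃ l, d l ≠ 0 := ⟨i₀.1, by simp [hd, i₀.2]; exact hgi₀⟩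
      -- WLOG some d l > 0
      obtain ⟨d, hdsupp, hdsum, l₁, hl₁⟩ :
          ∃ d : Fin v → ℝ, (∀ l, d l ≠ 0 → x l ≠ 0) ∧ ((∑ l, d l • c l) = 0) ∧
            ∃ l, 0 < d l := by
        obtain ⟨l, hl⟩ := hdne
        rcases lt_or_gt_of_ne hl with h | h
        · refine ⟨-d, fun l hl => hdsupp l (by simpa using hl), ?_, l, by simpa using h⟩
          simp only [Pi.neg_apply, neg_smul, Finset.sum_neg_distrib, hdsum, neg_zero]
        · exact ⟨d, hdsupp, hdsum, l, h⟩
      set P := Finset.univ.filter (fun l => 0 < d l) with hP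
      have hPne : P.Nonempty := ⟨l₁, by simp [hP, hl₁]⟩
      obtain ⟨l₀, hl₀P, hl₀min⟩ := Finset.exists_min_image P (fun l => x l / d l) hPne
      have hdl₀ : 0 < d l₀ := by simpa [hP] using hl₀P
      set t := x l₀ / d l₀ with ht
      have ht0 : 0 ≤ t := div_nonneg (hx l₀) hdl₀.le
      set x' : Fin v → ℝ := fun l => x l - t * d l with hx'
      have hx'0 : ∀ l, 0 ≤ x' l := by
        intro l
        by_cases h : 0 < d l
        · have := hl₀min l (by simp [hP, h])
          have h2 : t * d l ≤ (x l / d l) * d l := by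
            apply mul_le_mul_of_nonneg_right _ h.le
            exact this
          rw [div_mul_cancel₀ _ h.ne'] at h2
          simp only [hx']; linarith
        · push_neg at h
          have : 0 ≤ -(t * d l) := by
            have h2 : -(t * d l) = t * (-d l) := by ring
            rw [h2]
            exact mul_nonneg ht0 (by linarith)
          have := hx l
          simp only [hx']; linarith
      have hx'sum : (∑ l, x' l • c l) = ∑ l, x l • c l := by
        simp only [hx', sub_smul, smul_eq_mul, Finset.sum_sub_distrib]
        have : (∑ l, (t * d l) • c l) = t • ∑ l, d l • c l := by
          rw [Finset.smul_sum]
          apply Finset.sum_congr rfl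
          intro l _
          rw [smul_smul]
        rw [this, hdsum, smul_zero, sub_zero]
      have hsub : Finset.univ.filter (fun l => x' l ≠ 0) ⊂
          Finset.univ.filter (fun l => x l ≠ 0) := by
        constructor
        · intro l hl
          simp only [Finset.mem_filter, Finset.mem_univ, true_and] at hl ⊢
          intro h
          apply hl
          by_cases hdl : d l = 0
          · simp [hx', h, hdl]
          · exact absurd (hdsupp l hdl) (by simp [h])
        · intro hsub2
          have h1 : l₀ ∈ Finset.univ.filter (fun l => x l ≠ 0) := by
            simp only [Finset.mem_filter, Finset.mem_univ, true_and]
            exact hdsupp l₀ hdl₀.ne'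
          have h2 := hsub2 h1
          simp only [Finset.mem_filter, Finset.mem_univ, true_and] at h2
          apply h2
          simp only [hx', ht]
          field_simp
          ring
      have hcard' : (Finset.univ.filter (fun l => x' l ≠ 0)).card ≤ N := by
        have := Finset.card_lt_card hsub
        omega
      obtain ⟨x'', h1, h2, h3⟩ := ih x' hcard' hx'0
      exact ⟨x'', h1, by rw [h2, hx'sum], h3⟩

/-- finitely generated cones are closed -/
theorem cone_closed {ι : Type} [Fintype ι] {v : ℕ} (c : Fin v → (ι → ℝ)) :
    IsClosed {y : ι → ℝ | ∃ x : Fin v → ℝ, (∀ l, 0 ≤ x l) ∧ y = ∑ l, x l • c l} := by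
  have hset : {y : ι → ℝ | ∃ x : Fin v → ℝ, (∀ l, 0 ≤ x l) ∧ y = ∑ l, x l • c l} =
      ⋃ (s : {s : Finset (Fin v) // LinearIndependent ℝ (fun l : ↥s => c l.1)}),
        {y : ι → ℝ | ∃ x : Fin v → ℝ, (∀ l, 0 ≤ x l) ∧ (∀ l, l ∉ s.1 → x l = 0) ∧
          y = ∑ l, x l • c l} := by
    ext y
    simp only [Set.mem_setOf_eq, Set.mem_iUnion]
    constructor
    · rintro ⟨x, hx, rfl⟩
      obtain ⟨x', hx', hsum, hli⟩ := indep_rep c _ x le_rfl hx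
      have hli2 : LinearIndependent ℝ
          (fun l : ↥(Finset.univ.filter (fun l => x' l ≠ 0)) => c l.1) := by
        let e : ↥(Finset.univ.filter (fun l => x' l ≠ 0)) ≃ {l // x' l ≠ 0} :=
          (Equiv.subtypeEquivRight (by intro l; simp))
        have h := hli.comp e e.injective
        have hco : ((fun l : {l // x' l ≠ 0} => c l.1) ∘ e) =
            (fun l : ↥(Finset.univ.filter (fun l => x' l ≠ 0)) => c l.1) := by
          funext l
          simp [e, Equiv.subtypeEquivRight]
          rfl
        rwa [hco] at h
      refine ⟨⟨_, hli2⟩, x', hx', ?_, hsum.symm⟩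
      intro l hl
      by_contra h
      exact hl (by simp [h])
    · rintro ⟨s, x, hx, hh, rfl⟩
      exact ⟨x, hx, rfl⟩
  rw [hset]
  apply isClosed_iUnion_of_finite
  rintro ⟨s, hs⟩
  -- the simplicial cone on s is the image of a closed embedding
  set φ : (↥s → ℝ) →ₗ[ℝ] (ι → ℝ) :=
    { toFun := fun z => ∑ i : ↥s, z i • c i.1
      map_add' := by
        intro z w
        simp only [Pi.add_apply, add_smul, Finset.sum_add_distrib]
      map_smul' := by
        intro r z
        simp only [Pi.smul_apply, smul_eq_mul, RingHom.id_apply, Finset.smul_sum, smul_smul] } with hφ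
  have hφinj : Function.Injective φ := by
    rw [← LinearMap.ker_eq_bot, LinearMap.ker_eq_bot']
    intro z hz
    have := Fintype.linearIndependent_iff.mp hs z hz
    funext i
    exact this i
  have hemb : IsClosedEmbedding φ :=
    LinearMap.isClosedEmbedding_of_injective (LinearMap.ker_eq_bot.mpr hφinj)
  have himg : {y : ι → ℝ | ∃ x : Fin v → ℝ, (∀ l, 0 ≤ x l) ∧ (∀ l, l ∉ s → x l = 0) ∧
      y = ∑ l, x l • c l} = φ '' {z | ∀ i, 0 ≤ z i} := by
    ext y
    simp only [Set.mem_setOf_eq, Set.mem_image]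
    constructor
    · rintro ⟨x, hx, hsupp, rfl⟩
      refine ⟨fun i => x i.1, fun i => hx i.1, ?_⟩
      show (∑ i : ↥s, x i.1 • c i.1) = ∑ l, x l • c l
      rw [Finset.sum_coe_sort s (fun l => x l • c l)]
      apply Finset.sum_subset (Finset.subset_univ s)
      intro l _ hl
      rw [hsupp l hl, zero_smul]
    · rintro ⟨z, hz, rfl⟩
      refine ⟨fun l => if h : l ∈ s then z ⟨l, h⟩ else 0, ?_, ?_, ?_⟩
      · intro l
        by_cases h : l ∈ s
        · simp only [dif_pos h]; exact hz ⟨l, h⟩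
        · simp [dif_neg h]
      · intro l hl; simp [dif_neg hl]
      · show (∑ i : ↥s, z i • c i.1) = ∑ l, (if h : l ∈ s then z ⟨l, h⟩ else 0) • c l
        have h1 : (∑ l, (if h : l ∈ s then z ⟨l, h⟩ else 0) • c l)
            = ∑ l ∈ s, (if h : l ∈ s then z ⟨l, h⟩ else 0) • c l := by
          symm
          apply Finset.sum_subset (Finset.subset_univ s)
          intro l _ hl
          simp [dif_neg hl]
        have h2 : (∑ l ∈ s, (if h : l ∈ s then z ⟨l, h⟩ else 0) • c l)
            = ∑ i : ↥s, (if h : (i:Fin v) ∈ s then z ⟨i.1, h⟩ else 0) • c i.1 :=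
          (Finset.sum_coe_sort s (fun l => (if h : l ∈ s then z ⟨l, h⟩ else 0) • c l)).symm
        rw [h1, h2]
        apply Finset.sum_congr rfl
        intro i _
        rw [dif_pos i.2]
  rw [himg]
  apply hemb.isClosedMap
  have : {z : ↥s → ℝ | ∀ i, 0 ≤ z i} = ⋂ i, (fun z : ↥s → ℝ => z i) ⁻¹' Set.Ici 0 := by
    ext z
    simp [Set.mem_iInter]
  rw [this]
  exact isClosed_iInter fun i => isClosed_Ici.preimage (continuous_apply i)



theorem tendsto_two_rpow_neg : Tendsto (fun n : ℕ => (2:ℝ) ^ (-(n:ℝ))) atTop (nhds 0) := by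
  have h : ∀ n : ℕ, (2:ℝ) ^ (-(n:ℝ)) = (1/2)^n := by
    intro n
    rw [Real.rpow_neg (by norm_num), Real.rpow_natCast]
    simp [one_div, inv_pow]
  simp only [h]
  exact tendsto_pow_atTop_nhds_zero_of_lt_one (by norm_num) (by norm_num)

theorem tendsto_two_rpow_one {e : ℕ → ℝ} (he : Tendsto e atTop (nhds 0)) :
    Tendsto (fun n => (2:ℝ) ^ (e n)) atTop (nhds 1) := by
  have h : ∀ n, (2:ℝ) ^ (e n) = Real.exp (Real.log 2 * e n) := fun n =>
    Real.rpow_def_of_pos (by norm_num) (e n)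
  simp only [h]
  have h2 : Tendsto (fun n => Real.log 2 * e n) atTop (nhds 0) := by
    simpa using he.const_mul (Real.log 2)
  have h3 := (Real.continuous_exp.tendsto 0).comp h2
  simpa [Function.comp_def] using h3

set_option maxHeartbeats 2000000 in
theorem ipr_fe {u v : ℕ} {M : Matrix (Fin u) (Fin v) ℝ} (hM : IPR u v M) :
    ∃ (m : ℕ) (G : Matrix (Fin v) (Fin m) ℝ), (∀ j k, 0 ≤ G j k) ∧ FE (M * G) := by
  rcases Nat.eq_zero_or_pos u with hu | hu
  · subst hu
    refine ⟨0, Matrix.of fun _ j => 0, fun _ _ => le_refl _, ?_, ?_, ?_⟩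
    · exact fun i => i.elim0
    · exact fun i => i.elim0
    · exact fun i => i.elim0
  -- setup colorings
  set N : ℕ → ℕ := fun n => n + u + 2 with hN
  set K : ℕ → ℕ := fun n => 2 * (N n)^2 + 1 with hK
  have hKpos : ∀ n, 0 < K n := fun n => by positivity
  set q : ℕ → ℝ → ℤ := fun n yv => ⌊(N n : ℝ) * Real.logb 2 yv⌋ with hq
  set χ : ∀ n : ℕ, ℝ → Fin (K n) := fun n yv =>
    if h : 0 < yv then
      ⟨(q n yv % (K n : ℤ)).toNat, by
        have h1 : (0:ℤ) < (K n : ℤ) := by exact_mod_cast hKpos n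
        have h2 := Int.emod_nonneg (q n yv) h1.ne'
        have h3 := Int.emod_lt_of_pos (q n yv) h1
        omega⟩
    else ⟨0, hKpos n⟩ with hχ
  choose x hxpos hypos k hk using fun n => hM (K n) (hKpos n) (χ n)
  set L : ℕ → Fin u → ℝ := fun n i => Real.logb 2 (M.mulVec (x n) i) with hL
  -- dichotomy from monochromaticity
  have hdich : ∀ n i i', |L n i - L n i'| < 1/(N n) ∨ 2 * (N n) < |L n i - L n i'| := by
    intro n i i'
    have hc : χ n (M.mulVec (x n) i) = χ n (M.mulVec (x n) i') := by rw [hk n i, hk n i']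
    have hNpos : (0:ℝ) < (N n : ℝ) := by positivity
    have hEq : q n (M.mulVec (x n) i) % (K n : ℤ) = q n (M.mulVec (x n) i') % (K n : ℤ) := by
      have h1 := hypos n i; have h2 := hypos n i'
      simp only [hχ, dif_pos h1, dif_pos h2, Fin.mk.injEq] at hc
      have hz : (0:ℤ) < (K n : ℤ) := by exact_mod_cast hKpos n
      have e1 := Int.emod_nonneg (q n (M.mulVec (x n) i)) hz.ne'
      have e2 := Int.emod_nonneg (q n (M.mulVec (x n) i')) hz.ne'
      omega
    set a : ℝ := (N n : ℝ) * L n i with ha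
    set b : ℝ := (N n : ℝ) * L n i' with hb
    have hqa : q n (M.mulVec (x n) i) = ⌊a⌋ := rfl
    have hqb : q n (M.mulVec (x n) i') = ⌊b⌋ := rfl
    rw [hqa, hqb] at hEq
    have hdvd : (K n : ℤ) ∣ ⌊b⌋ - ⌊a⌋ := Int.ModEq.dvd hEq
    have hfa1 : (⌊a⌋ : ℝ) ≤ a := Int.floor_le a
    have hfa2 : a < ⌊a⌋ + 1 := Int.lt_floor_add_one a
    have hfb1 : (⌊b⌋ : ℝ) ≤ b := Int.floor_le b
    have hfb2 : b < ⌊b⌋ + 1 := Int.lt_floor_add_one b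
    have hab : a - b = (N n : ℝ) * (L n i - L n i') := by ring
    rcases eq_or_ne (⌊b⌋ - ⌊a⌋) 0 with h0 | h0
    · left
      have hfl : ⌊a⌋ = ⌊b⌋ := by omega
      have : (⌊a⌋ : ℝ) = (⌊b⌋ : ℝ) := by exact_mod_cast hfl
      have habs : |a - b| < 1 := by
        rw [abs_lt]; constructor <;> nlinarith
      rw [hab] at habs
      rw [abs_mul, abs_of_pos hNpos] at habs
      rw [lt_div_iff₀ hNpos]
      linarith [abs_nonneg (L n i - L n i')]
    · right
      obtain ⟨t, ht⟩ := hdvd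
      have htne : t ≠ 0 := by rintro rfl; simp at ht; omega
      have hKK : (K n : ℤ) ≤ |⌊b⌋ - ⌊a⌋| := by
        rw [ht, abs_mul]
        have h1 : (1:ℤ) ≤ |t| := Int.one_le_abs htne
        have h2 : |(K n : ℤ)| = (K n : ℤ) := abs_of_pos (by exact_mod_cast hKpos n)
        nlinarith [abs_nonneg (K n : ℤ)]
      have hKR : ((K n : ℕ) : ℝ) ≤ |(⌊b⌋ : ℝ) - (⌊a⌋ : ℝ)| := by
        have : ((K n : ℤ) : ℝ) ≤ |((⌊b⌋ - ⌊a⌋ : ℤ) : ℝ)| := by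
          rw [← Int.cast_abs]; exact_mod_cast hKK
        push_cast at this ⊢
        linarith
      have habs : (K n : ℝ) - 1 < |a - b| := by
        rcases abs_cases ((⌊b⌋ : ℝ) - (⌊a⌋ : ℝ)) with ⟨he, _⟩ | ⟨he, _⟩ <;>
          rcases abs_cases (a - b) with ⟨he2, _⟩ | ⟨he2, _⟩ <;> nlinarith
      have hK1 : (K n : ℝ) - 1 = 2 * (N n : ℝ)^2 := by
        simp only [hK]; push_cast; ring
      rw [hab, abs_mul, abs_of_pos hNpos] at habs
      rw [hK1] at habs
      nlinarith
  -- pattern extraction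
  set PatE : ℕ → Finset (Fin u × Fin u) := fun n =>
    Finset.univ.filter (fun p => |L n p.1 - L n p.2| ≤ (u:ℝ)) with hPatE
  set PatO : ℕ → Finset (Fin u × Fin u) := fun n =>
    Finset.univ.filter (fun p => L n p.1 < L n p.2) with hPatO
  obtain ⟨pt, hptfib⟩ := Finite.exists_infinite_fiber (fun n => (PatE n, PatO n))
  have hinf : (setOf (fun n => (PatE n, PatO n) = pt)).Infinite := by
    have h2 := Set.infinite_coe_iff.mp hptfib
    have h3 : ((fun n => (PatE n, PatO n)) ⁻¹' {pt}) = setOf (fun n => (PatE n, PatO n) = pt) := by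
      ext n; simp; rfl
    rwa [h3] at h2
  set φ : ℕ → ℕ := Nat.nth (fun n => (PatE n, PatO n) = pt) with hφ
  have hφmem : ∀ n, (PatE (φ n), PatO (φ n)) = pt := fun n => Nat.nth_mem_of_infinite hinf n
  have hφmono : StrictMono φ := Nat.nth_strictMono hinf
  have hφle : ∀ n, n ≤ φ n := fun n => hφmono.le_apply
  have hPatEeq : ∀ n, PatE (φ n) = PatE (φ 0) := by
    intro n
    have h1 : (PatE (φ n), PatO (φ n)) = (PatE (φ 0), PatO (φ 0)) := by
      rw [hφmem n, hφmem 0]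
    exact congrArg Prod.fst h1
  have hPatOeq : ∀ n, PatO (φ n) = PatO (φ 0) := by
    intro n
    have h1 : (PatE (φ n), PatO (φ n)) = (PatE (φ 0), PatO (φ 0)) := by
      rw [hφmem n, hφmem 0]
    exact congrArg Prod.snd h1
  set Erel : Fin u → Fin u → Prop := fun i i' => |L (φ 0) i - L (φ 0) i'| ≤ (u:ℝ) with hErel
  set Orel : Fin u → Fin u → Prop := fun i i' => L (φ 0) i < L (φ 0) i' with hOrel
  have hEconst : ∀ n i i', Erel i i' ↔ |L (φ n) i - L (φ n) i'| ≤ (u:ℝ) := by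
    intro n i i'
    have h2 : ((i,i') ∈ PatE (φ n)) ↔ ((i,i') ∈ PatE (φ 0)) := by rw [hPatEeq n]
    simp only [hPatE, Finset.mem_filter, Finset.mem_univ, true_and] at h2
    simp only [hErel]
    exact h2.symm
  have hOconst : ∀ n i i', Orel i i' ↔ L (φ n) i < L (φ n) i' := by
    intro n i i'
    have h2 : ((i,i') ∈ PatO (φ n)) ↔ ((i,i') ∈ PatO (φ 0)) := by rw [hPatOeq n]
    simp only [hPatO, Finset.mem_filter, Finset.mem_univ, true_and] at h2
    simp only [hOrel]
    exact h2.symm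
  have hNφ : ∀ n : ℕ, (n:ℝ) + 1 ≤ (N (φ n) : ℝ) := by
    intro n
    have h1 := hφle n
    have h2 : (n:ℝ) ≤ (φ n : ℝ) := by exact_mod_cast h1
    simp only [hN]
    push_cast
    linarith
  have hNu : ∀ n : ℕ, (u:ℝ) + 2 ≤ (N (φ n) : ℝ) := by
    intro n
    simp only [hN]
    push_cast
    have : (0:ℝ) ≤ (φ n : ℝ) := by positivity
    linarith
  have hu1 : (1:ℝ) ≤ (u:ℝ) := by exact_mod_cast hu
  -- fine and gap bounds
  have hfine : ∀ n i i', Erel i i' → |L (φ n) i - L (φ n) i'| < 1/(N (φ n) : ℝ) := by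
    intro n i i' hE
    rcases hdich (φ n) i i' with h | h
    · exact h
    · exfalso
      have h2 := (hEconst n i i').mp hE
      have := hNu n
      nlinarith
  have hgap : ∀ n i i', ¬ Erel i i' → 2 * (N (φ n) : ℝ) < |L (φ n) i - L (φ n) i'| := by
    intro n i i' hE
    rcases hdich (φ n) i i' with h | h
    · exfalso
      apply hE
      rw [hEconst n i i']
      have hN1 : (1:ℝ) ≤ (N (φ n) : ℝ) := by
        have := hNu n; linarith
      have : 1/(N (φ n) : ℝ) ≤ 1 := by
        rw [div_le_one (by linarith)]; linarith
      linarith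
    · exact h
  -- Erel is an equivalence
  have hErefl : ∀ i, Erel i i := by
    intro i
    simp only [hErel, sub_self, abs_zero]
    positivity
  have hEsymm : ∀ {i i'}, Erel i i' → Erel i' i := by
    intro i i' h
    simp only [hErel] at h ⊢
    rwa [abs_sub_comm]
  have hEtrans : ∀ {i i' i''}, Erel i i' → Erel i' i'' → Erel i i'' := by
    intro i i' i'' h1 h2
    have f1 := hfine 0 i i' h1
    have f2 := hfine 0 i' i'' h2
    have hN1 : (2:ℝ) ≤ (N (φ 0) : ℝ) := by have := hNu 0; linarith
    have hNpos : (0:ℝ) < (N (φ 0) : ℝ) := by linarith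
    have hd1 : 1/(N (φ 0) : ℝ) ≤ 1/2 := by
      apply one_div_le_one_div_of_le <;> linarith
    simp only [hErel]
    have habs : |L (φ 0) i - L (φ 0) i''| ≤ |L (φ 0) i - L (φ 0) i'| + |L (φ 0) i' - L (φ 0) i''| := by
      have := abs_sub_le (L (φ 0) i) (L (φ 0) i') (L (φ 0) i'')
      exact this
    linarith
  -- order facts
  have hOtotal : ∀ {i i'}, ¬ Erel i i' → (Orel i i' ∨ Orel i' i) := by
    intro i i' h
    have := hgap 0 i i' h
    have hNpos : (0:ℝ) < (N (φ 0) : ℝ) := by have := hNu 0; linarith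
    rcases lt_trichotomy (L (φ 0) i) (L (φ 0) i') with h1 | h1 | h1
    · exact Or.inl h1
    · exfalso; rw [h1] at this; simp at this; linarith
    · exact Or.inr h1
  -- ranks and representatives
  set Above : Fin u → Finset (Fin u) := fun i =>
    Finset.univ.filter (fun i' => ¬ Erel i i' ∧ Orel i i') with hAbove
  set reps : Finset (Fin u) := Finset.univ.filter (fun i => ∀ i', Erel i i' → i ≤ i') with hreps
  set rk : Fin u → ℕ := fun i => (Above i ∩ reps).card with hrk
  set m : ℕ := reps.card with hm
  have hrepOf : ∀ i : Fin u, ∃ r, r ∈ reps ∧ Erel i r := by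
    intro i
    set cl : Finset (Fin u) := Finset.univ.filter (fun i'' => Erel i i'') with hcl
    have hclne : cl.Nonempty := ⟨i, by simp [hcl, hErefl i]⟩
    refine ⟨cl.min' hclne, ?_, ?_⟩
    · simp only [hreps, Finset.mem_filter, Finset.mem_univ, true_and]
      intro i' hEri'
      have hiri : Erel i (cl.min' hclne) := by
        have := cl.min'_mem hclne
        simpa [hcl] using this
      have : i' ∈ cl := by
        simp only [hcl, Finset.mem_filter, Finset.mem_univ, true_and]
        exact hEtrans hiri hEri'
      exact cl.min'_le i' this
    · have := cl.min'_mem hclne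
      simpa [hcl] using this
  -- key value lemmas
  have hOrelval : ∀ i i', Orel i i' ↔ L (φ 0) i < L (φ 0) i' := fun i i' => Iff.rfl
  have hErelval : ∀ i i', Erel i i' ↔ |L (φ 0) i - L (φ 0) i'| ≤ (u:ℝ) := fun i i' => Iff.rfl
  have hN0 : (u:ℝ) + 2 ≤ (N (φ 0) : ℝ) := hNu 0
  have hgap0 : ∀ {i i'}, ¬ Erel i i' → 2 * (N (φ 0) : ℝ) < |L (φ 0) i - L (φ 0) i'| :=
    fun {i i'} h => hgap 0 i i' h
  have hEval : ∀ {i i'}, ¬ Erel i i' → Orel i i' → L (φ 0) i' - L (φ 0) i > 2 * (N (φ 0) : ℝ) := by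
    intro i i' hne ho
    have := hgap0 hne
    rw [hOrelval] at ho
    rcases abs_cases (L (φ 0) i - L (φ 0) i') with ⟨he, _⟩ | ⟨he, _⟩ <;> linarith
  have hAbove_inv : ∀ {i i'}, Erel i i' → Above i = Above i' := by
    intro i i' hE
    have hE' : |L (φ 0) i - L (φ 0) i'| ≤ (u:ℝ) := hE
    ext i''
    simp only [hAbove, Finset.mem_filter, Finset.mem_univ, true_and]
    constructor
    · rintro ⟨h1, h2⟩
      have hg := hEval h1 h2
      constructor
      · intro hE2
        have hE2' : |L (φ 0) i' - L (φ 0) i''| ≤ (u:ℝ) := hE2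
        rcases abs_cases (L (φ 0) i - L (φ 0) i') with ⟨he, _⟩ | ⟨he, _⟩ <;>
          rcases abs_cases (L (φ 0) i' - L (φ 0) i'') with ⟨he2, _⟩ | ⟨he2, _⟩ <;> linarith
      · show L (φ 0) i' < L (φ 0) i''
        rcases abs_cases (L (φ 0) i - L (φ 0) i') with ⟨he, _⟩ | ⟨he, _⟩ <;> linarith
    · rintro ⟨h1, h2⟩
      have hg := hEval h1 h2
      constructor
      · intro hE2
        have hE2' : |L (φ 0) i - L (φ 0) i''| ≤ (u:ℝ) := hE2
        rcases abs_cases (L (φ 0) i - L (φ 0) i') with ⟨he, _⟩ | ⟨he, _⟩ <;>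
          rcases abs_cases (L (φ 0) i - L (φ 0) i'') with ⟨he2, _⟩ | ⟨he2, _⟩ <;> linarith
      · show L (φ 0) i < L (φ 0) i''
        rcases abs_cases (L (φ 0) i - L (φ 0) i') with ⟨he, _⟩ | ⟨he, _⟩ <;> linarith
  have hrk_eq : ∀ {i i'}, Erel i i' → rk i = rk i' := by
    intro i i' hE
    simp only [hrk]
    rw [hAbove_inv hE]
  have hrk_lt : ∀ {i i'}, ¬ Erel i i' → Orel i i' → rk i' < rk i := by
    intro i i' hne ho
    have hg := hEval hne ho
    obtain ⟨w, hwreps, hwE⟩ := hrepOf i'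
    have hwE' : |L (φ 0) i' - L (φ 0) w| ≤ (u:ℝ) := hwE
    have hsub : Above i' ∩ reps ⊆ Above i ∩ reps := by
      intro i'' hi''
      simp only [Finset.mem_inter, hAbove, Finset.mem_filter, Finset.mem_univ, true_and] at hi'' ⊢
      obtain ⟨⟨h1, h2⟩, h3⟩ := hi''
      have hg2 := hEval h1 h2
      refine ⟨⟨?_, ?_⟩, h3⟩
      · intro hE2
        have hE2' : |L (φ 0) i - L (φ 0) i''| ≤ (u:ℝ) := hE2
        rcases abs_cases (L (φ 0) i - L (φ 0) i'') with ⟨he, _⟩ | ⟨he, _⟩ <;> linarith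
      · show L (φ 0) i < L (φ 0) i''
        linarith [hOrelval i i' |>.mp ho, hOrelval i' i'' |>.mp h2]
    have hwmem : w ∈ Above i ∩ reps := by
      simp only [Finset.mem_inter, hAbove, Finset.mem_filter, Finset.mem_univ, true_and]
      refine ⟨⟨?_, ?_⟩, hwreps⟩
      · intro hE2
        have hE2' : |L (φ 0) i - L (φ 0) w| ≤ (u:ℝ) := hE2
        rcases abs_cases (L (φ 0) i - L (φ 0) w) with ⟨he, _⟩ | ⟨he, _⟩ <;>
          rcases abs_cases (L (φ 0) i' - L (φ 0) w) with ⟨he2, _⟩ | ⟨he2, _⟩ <;> linarith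
      · show L (φ 0) i < L (φ 0) w
        rcases abs_cases (L (φ 0) i' - L (φ 0) w) with ⟨he2, _⟩ | ⟨he2, _⟩ <;> linarith
    have hwnot : w ∉ Above i' ∩ reps := by
      simp only [Finset.mem_inter, hAbove, Finset.mem_filter, Finset.mem_univ, true_and]
      rintro ⟨⟨h1, _⟩, _⟩
      exact h1 hwE
    apply Finset.card_lt_card
    exact ⟨hsub, fun hcon => hwnot (hcon hwmem)⟩
  have hrk_lt_m : ∀ i, rk i < m := by
    intro i
    obtain ⟨r, hrreps, hrE⟩ := hrepOf i
    have hsub : Above i ∩ reps ⊆ reps.erase r := by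
      intro i'' hi''
      simp only [Finset.mem_inter, hAbove, Finset.mem_filter, Finset.mem_univ, true_and] at hi''
      obtain ⟨⟨h1, _⟩, h3⟩ := hi''
      refine Finset.mem_erase.mpr ⟨?_, h3⟩
      rintro rfl
      exact h1 hrE
    have h1 := Finset.card_le_card hsub
    have h2 := Finset.card_erase_of_mem hrreps
    have h3 : 0 < m := by
      rw [hm]
      exact Finset.card_pos.mpr ⟨r, hrreps⟩
    simp only [hrk, hm] at *
    omega
  have hcls : ∀ {i i'}, rk i = rk i' → Erel i i' := by
    intro i i' h
    by_contra hne
    rcases hOtotal hne with ho | ho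
    · have := hrk_lt hne ho; omega
    · have := hrk_lt (fun hE => hne (hEsymm hE)) ho; omega
  -- surjectivity of rank onto Fin m
  have hrep_surj : ∀ j : Fin m, ∃ i : Fin u, i ∈ reps ∧ rk i = (j:ℕ) := by
    have hginj : Function.Injective (fun r : ↥reps => (⟨rk r.1, hrk_lt_m r.1⟩ : Fin m)) := by
      rintro ⟨r, hr⟩ ⟨r', hr'⟩ hEq
      simp only [Fin.mk.injEq] at hEq
      have hE := hcls hEq
      simp only [hreps, Finset.mem_filter, Finset.mem_univ, true_and] at hr hr'
      exact Subtype.ext (le_antisymm (hr r' hE) (hr' r (hEsymm hE)))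
    have hcard : Fintype.card ↥reps = Fintype.card (Fin m) := by
      rw [Fintype.card_coe, Fintype.card_fin]
    have hbij := (Fintype.bijective_iff_injective_and_card
      (fun r : ↥reps => (⟨rk r.1, hrk_lt_m r.1⟩ : Fin m))).mpr ⟨hginj, hcard⟩
    intro j
    obtain ⟨⟨r, hr⟩, hrj⟩ := hbij.surjective j
    refine ⟨r, hr, ?_⟩
    simpa using congrArg Fin.val hrj
  -- construction of the columns by closedness of the image cone
  have hcol : ∀ j : Fin m, ∃ g : Fin v → ℝ, (∀ l, 0 ≤ g l) ∧
      (∀ i : Fin u, (j:ℕ) ≤ rk i → M.mulVec g i = if rk i = (j:ℕ) then 1 else 0) := by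
    intro j
    obtain ⟨ρ, hρreps, hρrk⟩ := hrep_surj j
    set w : ℕ → {i : Fin u // (j:ℕ) ≤ rk i} → ℝ :=
      fun n i => M.mulVec ((M.mulVec (x (φ n)) ρ)⁻¹ • x (φ n)) i.1 with hw
    set τ : {i : Fin u // (j:ℕ) ≤ rk i} → ℝ := fun i => if rk i.1 = (j:ℕ) then 1 else 0 with hτ
    have hwcone : ∀ n, w n ∈ {y : {i : Fin u // (j:ℕ) ≤ rk i} → ℝ | ∃ xx : Fin v → ℝ,
        (∀ l, 0 ≤ xx l) ∧ y = ∑ l, xx l • (fun i : {i : Fin u // (j:ℕ) ≤ rk i} => M i.1 l)} := by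
      intro n
      refine ⟨(M.mulVec (x (φ n)) ρ)⁻¹ • x (φ n), ?_, ?_⟩
      · intro l
        have h1 := hypos (φ n) ρ
        have h2 := hxpos (φ n) l
        simp only [Pi.smul_apply, smul_eq_mul]
        positivity
      · funext i
        show M.mulVec ((M.mulVec (x (φ n)) ρ)⁻¹ • x (φ n)) i.1 = _
        rw [Finset.sum_apply, mulVec_apply]
        apply Finset.sum_congr rfl
        intro l _
        simp only [Pi.smul_apply, smul_eq_mul]
        ring
    have hwval : ∀ (n) (i : {i : Fin u // (j:ℕ) ≤ rk i}),
        w n i = (2:ℝ) ^ (L (φ n) i.1 - L (φ n) ρ) := by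
      intro n i
      simp only [hw]
      rw [Matrix.mulVec_smul]
      simp only [Pi.smul_apply, smul_eq_mul]
      rw [Real.rpow_sub (by norm_num)]
      simp only [hL]
      rw [Real.rpow_logb (by norm_num) (by norm_num) (hypos (φ n) i.1),
          Real.rpow_logb (by norm_num) (by norm_num) (hypos (φ n) ρ)]
      rw [inv_mul_eq_div]
    have hlim : Tendsto (fun n => w n) atTop (nhds τ) := by
      rw [tendsto_pi_nhds]
      intro i
      rcases eq_or_lt_of_le i.2 with hj | hj
      · have hE : Erel i.1 ρ := hcls (by rw [← hj, hρrk])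
        have hτi : τ i = 1 := if_pos (by omega)
        rw [hτi]
        have hbound : ∀ n, |L (φ n) i.1 - L (φ n) ρ| ≤ 1/((n:ℝ)+1) := by
          intro n
          have h1 := hfine n i.1 ρ hE
          have h2 := hNφ n
          have hpos : (0:ℝ) < (n:ℝ)+1 := by positivity
          have h3 := one_div_le_one_div_of_le hpos h2
          linarith
        have hexp : Tendsto (fun n => L (φ n) i.1 - L (φ n) ρ) atTop (nhds 0) := by
          apply squeeze_zero_norm (fun n => ?_) tendsto_one_div_add_atTop_nhds_zero_nat
          rw [Real.norm_eq_abs]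
          exact hbound n
        have := tendsto_two_rpow_one hexp
        simp only [hwval]
        exact this
      · have hne : ¬ Erel i.1 ρ := by
          intro hE
          have := hrk_eq hE
          omega
        have ho : Orel i.1 ρ := by
          rcases hOtotal hne with h | h
          · exact h
          · exfalso
            have := hrk_lt (fun hE => hne (hEsymm hE)) h
            omega
        have hτi : τ i = 0 := if_neg (by omega)
        rw [hτi]
        have hb : ∀ n, w n i ≤ (2:ℝ) ^ (-(n:ℝ)) := by
          intro n
          rw [hwval]
          apply Real.rpow_le_rpow_of_exponent_le (by norm_num)
          have h1 := hgap n i.1 ρ hne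
          have h2 : L (φ n) i.1 < L (φ n) ρ := (hOconst n i.1 ρ).mp ho
          have h3 := hNφ n
          rcases abs_cases (L (φ n) i.1 - L (φ n) ρ) with ⟨he, _⟩ | ⟨he, _⟩ <;> linarith
        have h0 : ∀ n, 0 ≤ w n i := by
          intro n
          rw [hwval]
          positivity
        exact squeeze_zero h0 hb tendsto_two_rpow_neg
    have hcl := cone_closed (fun l => (fun i : {i : Fin u // (j:ℕ) ≤ rk i} => M i.1 l))
    have hmem := hcl.mem_of_tendsto hlim (Filter.Eventually.of_forall hwcone)
    obtain ⟨xx, hxx0, hxxsum⟩ := hmem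
    refine ⟨xx, hxx0, ?_⟩
    intro i hi
    have hfi := congrFun hxxsum ⟨i, hi⟩
    simp only [hτ] at hfi
    rw [Finset.sum_apply] at hfi
    simp only [Pi.smul_apply, smul_eq_mul] at hfi
    show M.mulVec xx i = _
    simp only [Matrix.mulVec, dotProduct]
    rw [hfi]
    apply Finset.sum_congr rfl
    intro l _
    ring
  choose gv hgv0 hgval using hcol
  refine ⟨m, Matrix.of (fun l jj => gv jj l), fun l jj => hgv0 jj l, ?_, ?_, ?_⟩
  all_goals
    have hBapp : ∀ (i : Fin u) (jj : Fin m),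
        (M * Matrix.of (fun l jj => gv jj l)) i jj = M.mulVec (gv jj) i := by
      intro i jj
      simp [Matrix.mul_apply, Matrix.mulVec, dotProduct]
  · intro i
    refine ⟨⟨rk i, hrk_lt_m i⟩, ?_⟩
    rw [hBapp, hgval ⟨rk i, hrk_lt_m i⟩ i (le_refl _), if_pos rfl]
    norm_num
  · intro i jj hzero hne
    have hjj : (jj:ℕ) = rk i := by
      rcases lt_trichotomy (jj:ℕ) (rk i) with h | h | h
      · exfalso
        apply hne
        rw [hBapp, hgval jj i (le_of_lt h), if_neg (by omega)]
      · exact h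
      · exfalso
        have h2 := hzero ⟨rk i, hrk_lt_m i⟩ (by rw [Fin.lt_def]; exact h)
        rw [hBapp, hgval ⟨rk i, hrk_lt_m i⟩ i (le_refl _), if_pos rfl] at h2
        norm_num at h2
    rw [hBapp, hgval jj i (le_of_eq hjj), if_pos hjj.symm]
    norm_num
  · intro i i' jj h0 h0' hne hne'
    have hjj : (jj:ℕ) = rk i := by
      rcases lt_trichotomy (jj:ℕ) (rk i) with h | h | h
      · exfalso
        apply hne
        rw [hBapp, hgval jj i (le_of_lt h), if_neg (by omega)]
      · exact h
      · exfalso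
        have h2 := h0 ⟨rk i, hrk_lt_m i⟩ (by rw [Fin.lt_def]; exact h)
        rw [hBapp, hgval ⟨rk i, hrk_lt_m i⟩ i (le_refl _), if_pos rfl] at h2
        norm_num at h2
    have hjj' : (jj:ℕ) = rk i' := by
      rcases lt_trichotomy (jj:ℕ) (rk i') with h | h | h
      · exfalso
        apply hne'
        rw [hBapp, hgval jj i' (le_of_lt h), if_neg (by omega)]
      · exact h
      · exfalso
        have h2 := h0' ⟨rk i', hrk_lt_m i'⟩ (by rw [Fin.lt_def]; exact h)
        rw [hBapp, hgval ⟨rk i', hrk_lt_m i'⟩ i' (le_refl _), if_pos rfl] at h2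
        norm_num at h2
    rw [hBapp, hgval jj i (le_of_eq hjj), if_pos hjj.symm,
        hBapp, hgval jj i' (le_of_eq hjj'), if_pos hjj'.symm]
def SSstmt (m : ℕ) : Prop :=
  ∀ (ι : Type) (_ : Fintype ι) (B : Matrix ι (Fin m) ℝ), FE B →
  ∀ p : Ultrafilter ℝ, p + p = p → (∀ ε : ℝ, 0 < ε → Set.Ioo 0 ε ∈ p) →
    (∀ A ∈ p, JSetNearZero A) →
  ∀ A ∈ p, ∀ δ ε : ℝ, 0 < δ → 0 < ε →
  ∀ Gs : Finset (ℕ → ι → ℝ), (∀ G ∈ Gs, ∀ i, Tendsto (fun t => G t i) atTop (nhds 0)) →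
  ∀ hs : Finset (ℕ → ℝ), (∀ h ∈ hs, Tendsto h atTop (nhds 0)) →
  ∃ y : Fin m → ℝ, (∀ j, y j ∈ Set.Ioo 0 δ) ∧ ∃ H : Finset ℕ, H.Nonempty ∧
    (∀ G ∈ Gs, ∀ i, Matrix.mulVec B y i + ∑ t ∈ H, G t i ∈ A ∩ Set.Ioo 0 ε) ∧
    (∀ h ∈ hs, |∑ t ∈ H, h t| < ε)

def ITInv {ι : Type} [Fintype ι] {m : ℕ} (B : Matrix ι (Fin m) ℝ) (Astar : Set ℝ) (δ ε : ℝ)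
    (Gs : Finset (ℕ → ι → ℝ)) (hs : Finset (ℕ → ℝ))
    (n : ℕ) (Y : ℕ → Fin m → ℝ) (Hs : ℕ → Finset ℕ) : Prop :=
  (∀ k, k < n → ∀ j, 0 < Y k j ∧ Y k j ≤ δ * (1/2)^(k+1)) ∧
  (∀ k, k < n → (Hs k).Nonempty) ∧
  (∀ k k', k < k' → k' < n → ∀ t ∈ Hs k, ∀ t' ∈ Hs k', t < t') ∧
  (∀ k, k < n → ∀ h ∈ hs, |∑ t ∈ Hs k, h t| ≤ ε * (1/2)^(k+1)) ∧
  (∀ k, k < n → ∀ G ∈ Gs, ∀ i, |∑ t ∈ Hs k, G t i| ≤ ε * (1/2)^(k+1)) ∧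
  (∀ F : Finset ℕ, F.Nonempty → (∀ k ∈ F, k < n) → ∀ G ∈ Gs, ∀ i,
    Matrix.mulVec B (∑ k ∈ F, Y k) i + ∑ t ∈ F.biUnion Hs, G t i ∈ Astar)

theorem IT_step {m : ℕ} (hSS : SSstmt m) {ι : Type} [Fintype ι] (B : Matrix ι (Fin m) ℝ)
    (hB : FE B) {p : Ultrafilter ℝ} (hidem : p + p = p)
    (hp0 : ∀ ε : ℝ, 0 < ε → Set.Ioo 0 ε ∈ p) (hpJ : ∀ A ∈ p, JSetNearZero A)
    {A : Set ℝ} (hA : A ∈ p) {δ ε : ℝ} (hδ : 0 < δ) (hε : 0 < ε)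
    (Gs : Finset (ℕ → ι → ℝ)) (hGs : ∀ G ∈ Gs, ∀ i, Tendsto (fun t => G t i) atTop (nhds 0))
    (hs : Finset (ℕ → ℝ)) (hhs : ∀ h ∈ hs, Tendsto h atTop (nhds 0)) :
    ∀ (n : ℕ) (Y : ℕ → Fin m → ℝ) (Hs : ℕ → Finset ℕ),
      ITInv B (star p A) δ ε Gs hs n Y Hs →
      ∃ (y : Fin m → ℝ) (Hn : Finset ℕ),
        ITInv B (star p A) δ ε Gs hs (n+1) (Function.update Y n y) (Function.update Hs n Hn) := by
  intro n Y Hs hInv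
  obtain ⟨inv1, inv2, inv3, inv4, inv5, inv6⟩ := hInv
  set Astar := star p A with hAstar
  have hstarp : Astar ∈ p := star_mem hidem hA
  -- shift threshold
  set Tn : ℕ := ((Finset.range n).biUnion Hs).sup id + 1 with hTn
  have hTbig : ∀ k, k < n → ∀ t ∈ Hs k, t < Tn := by
    intro k hk t ht
    have : t ∈ (Finset.range n).biUnion Hs :=
      Finset.mem_biUnion.mpr ⟨k, Finset.mem_range.mpr hk, ht⟩
    have := Finset.le_sup (f := id) this
    simp only [id] at this
    omega
  -- the translated sets
  set Idx : Finset (Finset ℕ × ((ℕ → ι → ℝ) × ι)) :=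
    ((Finset.range n).powerset.filter (fun F => F.Nonempty)) ×ˢ (Gs ×ˢ Finset.univ) with hIdx
  set val : (Finset ℕ × ((ℕ → ι → ℝ) × ι)) → ℝ := fun q =>
    Matrix.mulVec B (∑ k ∈ q.1, Y k) q.2.2 + ∑ t ∈ q.1.biUnion Hs, q.2.1 t q.2.2 with hval
  have hvalmem : ∀ q ∈ Idx, val q ∈ Astar := by
    intro q hq
    simp only [hIdx, Finset.mem_product, Finset.mem_filter, Finset.mem_powerset] at hq
    exact inv6 q.1 hq.1.2 (fun k hk => Finset.mem_range.mp (hq.1.1 hk)) q.2.1 hq.2.1 q.2.2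
  set Dn : Set ℝ := Astar ∩ ⋂ q ∈ (Idx : Set (Finset ℕ × ((ℕ → ι → ℝ) × ι))), {z | val q + z ∈ Astar}
    with hDn
  have hDnp : Dn ∈ p := by
    refine Filter.inter_mem hstarp ?_
    rw [biInter_mem Idx.finite_toSet]
    intro q hq
    exact star_shift hidem hA (hvalmem q hq)
  have hDnsub : Dn ⊆ Astar := fun z hz => hz.1
  -- call SS
  set Gs' : Finset (ℕ → ι → ℝ) := Gs.image (fun G => fun t => G (t + Tn)) with hGs'
  have hGs'null : ∀ G ∈ Gs', ∀ i, Tendsto (fun t => G t i) atTop (nhds 0) := by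
    intro G hG i
    obtain ⟨G₀, hG₀, rfl⟩ := Finset.mem_image.mp hG
    exact (tendsto_add_atTop_iff_nat Tn).mpr (hGs G₀ hG₀ i)
  set hs' : Finset (ℕ → ℝ) := hs.image (fun h => fun t => h (t + Tn)) ∪
    (Gs ×ˢ (Finset.univ : Finset ι)).image (fun q => fun t => q.1 (t + Tn) q.2) with hhs'
  have hhs'null : ∀ h ∈ hs', Tendsto h atTop (nhds 0) := by
    intro h hh
    rcases Finset.mem_union.mp hh with hh | hh
    · obtain ⟨h₀, hh₀, rfl⟩ := Finset.mem_image.mp hh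
      exact (tendsto_add_atTop_iff_nat Tn).mpr (hhs h₀ hh₀)
    · obtain ⟨q, hq, rfl⟩ := Finset.mem_image.mp hh
      simp only [Finset.mem_product] at hq
      exact (tendsto_add_atTop_iff_nat Tn).mpr (hGs q.1 hq.1 q.2)
  have hδn : (0:ℝ) < δ * (1/2)^(n+1) := by positivity
  have hεn : (0:ℝ) < ε * (1/2)^(n+1) := by positivity
  obtain ⟨y, hy, H', hH'ne, hGmem, haux⟩ := hSS ι inferInstance B hB p hidem hp0 hpJ
    Dn hDnp (δ * (1/2)^(n+1)) (ε * (1/2)^(n+1)) hδn hεn Gs' hGs'null hs' hhs'null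
  set Hn : Finset ℕ := H'.image (fun t => t + Tn) with hHn
  have hinj : Function.Injective (fun t : ℕ => t + Tn) := add_left_injective Tn
  have hHnsum : ∀ g : ℕ → ℝ, (∑ t ∈ Hn, g t) = ∑ t ∈ H', g (t + Tn) := by
    intro g
    rw [hHn, Finset.sum_image (fun a _ b _ h => hinj h)]
  have hHnge : ∀ t ∈ Hn, Tn ≤ t := by
    intro t ht
    obtain ⟨t', _, rfl⟩ := Finset.mem_image.mp ht
    omega
  have hbr : ∀ G ∈ Gs, ∀ i,
      Matrix.mulVec B y i + ∑ t ∈ Hn, G t i ∈ Dn ∩ Set.Ioo 0 (ε * (1/2)^(n+1)) := by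
    intro G hG i
    have h1 := hGmem (fun t => G (t + Tn)) (Finset.mem_image_of_mem _ hG) i
    rw [hHnsum (fun t => G t i)]
    exact h1
  refine ⟨y, Hn, ?_, ?_, ?_, ?_, ?_, ?_⟩
  · intro k hk j
    rcases Nat.lt_succ_iff_lt_or_eq.mp hk with hk | rfl
    · rw [Function.update_of_ne (by omega)]
      exact inv1 k hk j
    · rw [Function.update_self]
      exact ⟨(hy j).1, le_of_lt (hy j).2⟩
  · intro k hk
    rcases Nat.lt_succ_iff_lt_or_eq.mp hk with hk | rfl
    · rw [Function.update_of_ne (by omega)]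
      exact inv2 k hk
    · rw [Function.update_self]
      exact hH'ne.image _
  · intro k k' hkk' hk'
    rcases Nat.lt_succ_iff_lt_or_eq.mp hk' with hk' | rfl
    · rw [Function.update_of_ne (by omega : k ≠ n), Function.update_of_ne (by omega : k' ≠ n)]
      exact inv3 k k' hkk' hk'
    · rw [Function.update_of_ne (by omega : k ≠ k'), Function.update_self]
      intro t ht t' ht'
      have h1 := hTbig k hkk' t ht
      have h2 := hHnge t' ht'
      omega
  · intro k hk h hh
    rcases Nat.lt_succ_iff_lt_or_eq.mp hk with hk | rfl
    · rw [Function.update_of_ne (by omega)]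
      exact inv4 k hk h hh
    · rw [Function.update_self]
      have h1 := haux (fun t => h (t + Tn))
        (Finset.mem_union_left _ (Finset.mem_image_of_mem _ hh))
      rw [hHnsum h]
      exact le_of_lt h1
  · intro k hk G hG i
    rcases Nat.lt_succ_iff_lt_or_eq.mp hk with hk | rfl
    · rw [Function.update_of_ne (by omega)]
      exact inv5 k hk G hG i
    · rw [Function.update_self]
      have hmemq : (fun t => G (t + Tn) i) ∈
          (Gs ×ˢ (Finset.univ : Finset ι)).image (fun q => fun t => q.1 (t + Tn) q.2) :=
        Finset.mem_image.mpr ⟨(G, i), Finset.mem_product.mpr ⟨hG, Finset.mem_univ i⟩, rfl⟩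
      have h1 := haux (fun t => G (t + Tn) i) (Finset.mem_union_right _ hmemq)
      rw [hHnsum (fun t => G t i)]
      exact le_of_lt h1
  · intro F hFne hFsub G hG i
    by_cases hnF : n ∈ F
    · set F' := F.erase n with hF'
      have hF'sub : ∀ k ∈ F', k < n := by
        intro k hk
        have h1 := Finset.mem_erase.mp hk
        have := hFsub k h1.2
        omega
      -- disjointness for the new Hs
      have hdisj : (↑F : Set ℕ).PairwiseDisjoint (Function.update Hs n Hn) := by
        intro a ha b hb hab
        simp only [Function.onFun]
        have hwlog : ∀ a b : ℕ, a ∈ F → b ∈ F → a < b →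
            Disjoint (Function.update Hs n Hn a) (Function.update Hs n Hn b) := by
          intro a b ha hb hlt
          rw [Finset.disjoint_left]
          intro t hta htb
          by_cases hbn : b = n
          · subst hbn
            rw [Function.update_of_ne (by omega)] at hta
            rw [Function.update_self] at htb
            have := hTbig a (by have := hFsub a ha; omega) t hta
            have := hHnge t htb
            omega
          · have hbn' : b < n := by have := hFsub b hb; omega
            rw [Function.update_of_ne (by omega)] at hta
            rw [Function.update_of_ne hbn] at htb
            exact absurd htb (by
              intro hcon
              have := inv3 a b hlt hbn' t hta t hcon
              omega)
        rcases lt_or_gt_of_ne hab with h | h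
        · exact hwlog a b ha hb h
        · exact (hwlog b a hb ha h).symm
      have hdisjold : (↑F' : Set ℕ).PairwiseDisjoint Hs := by
        intro a ha b hb hab
        simp only [Function.onFun]
        rcases lt_or_gt_of_ne hab with h | h
        · rw [Finset.disjoint_left]
          intro t hta htb
          have := inv3 a b h (hF'sub b hb) t hta t htb
          omega
        · rw [Finset.disjoint_left]
          intro t hta htb
          have := inv3 b a h (hF'sub a ha) t htb t hta
          omega
      -- sum decomposition
      have hsumY : (∑ k ∈ F, Function.update Y n y k) = (∑ k ∈ F', Y k) + y := by
        rw [← Finset.add_sum_erase _ _ hnF, Function.update_self]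
        rw [add_comm]
        congr 1
        apply Finset.sum_congr rfl
        intro k hk
        rw [Function.update_of_ne (Finset.mem_erase.mp hk).1]
      have hsumG : (∑ t ∈ F.biUnion (Function.update Hs n Hn), G t i)
          = (∑ t ∈ F'.biUnion Hs, G t i) + ∑ t ∈ Hn, G t i := by
        rw [Finset.sum_biUnion hdisj, Finset.sum_biUnion hdisjold]
        rw [← Finset.add_sum_erase _ _ hnF, Function.update_self, add_comm]
        congr 1
        apply Finset.sum_congr rfl
        intro k hk
        rw [Function.update_of_ne (Finset.mem_erase.mp hk).1]
      have hkey : Matrix.mulVec B (∑ k ∈ F, Function.update Y n y k) i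
          + ∑ t ∈ F.biUnion (Function.update Hs n Hn), G t i
          = (Matrix.mulVec B (∑ k ∈ F', Y k) i + ∑ t ∈ F'.biUnion Hs, G t i)
          + (Matrix.mulVec B y i + ∑ t ∈ Hn, G t i) := by
        rw [hsumY, hsumG, Matrix.mulVec_add]
        simp only [Pi.add_apply]
        ring
      rw [hkey]
      rcases Finset.eq_empty_or_nonempty F' with hF'e | hF'ne
      · rw [hF'e]
        simp only [Finset.sum_empty, Finset.biUnion_empty]
        have h2 := (hbr G hG i).1.1
        have h3 : Matrix.mulVec B (0 : Fin m → ℝ) i = 0 := by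
          rw [Matrix.mulVec_zero]
          rfl
        rw [h3]
        simpa using h2
      · have hq : (F', (G, i)) ∈ Idx := by
          simp only [hIdx, Finset.mem_product, Finset.mem_filter, Finset.mem_powerset]
          exact ⟨⟨fun k hk => Finset.mem_range.mpr (hF'sub k hk), hF'ne⟩, hG, Finset.mem_univ i⟩
        have h2 := (hbr G hG i).1.2
        have h3 : Matrix.mulVec B y i + ∑ t ∈ Hn, G t i ∈
            {z | val (F', (G, i)) + z ∈ Astar} := by
          have h5 : (⋂ q ∈ (Idx : Set (Finset ℕ × ((ℕ → ι → ℝ) × ι))), {z | val q + z ∈ Astar})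
              ⊆ {z | val (F', (G, i)) + z ∈ Astar} :=
            Set.biInter_subset_of_mem (Finset.mem_coe.mpr hq)
          exact h5 h2
        exact h3
    · -- n ∉ F : reduce to old invariant
      have hFsub' : ∀ k ∈ F, k < n := by
        intro k hk
        have := hFsub k hk
        have : k ≠ n := fun hcon => hnF (hcon ▸ hk)
        omega
      have h1 : (∑ k ∈ F, Function.update Y n y k) = ∑ k ∈ F, Y k := by
        apply Finset.sum_congr rfl
        intro k hk
        rw [Function.update_of_ne (by have := hFsub' k hk; omega)]
      have h2 : F.biUnion (Function.update Hs n Hn) = F.biUnion Hs := by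
        apply Finset.biUnion_congr rfl
        intro k hk
        rw [Function.update_of_ne (by have := hFsub' k hk; omega)]
      rw [h1, h2]
      exact inv6 F hFne hFsub' G hG i

def ITstmt (m : ℕ) : Prop :=
  ∀ (ι : Type) (_ : Fintype ι) (B : Matrix ι (Fin m) ℝ), FE B →
  ∀ p : Ultrafilter ℝ, p + p = p → (∀ ε : ℝ, 0 < ε → Set.Ioo 0 ε ∈ p) →
    (∀ A ∈ p, JSetNearZero A) →
  ∀ A ∈ p, ∀ δ ε : ℝ, 0 < δ → 0 < ε →
  ∀ Gs : Finset (ℕ → ι → ℝ), (∀ G ∈ Gs, ∀ i, Tendsto (fun t => G t i) atTop (nhds 0)) →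
  ∀ hs : Finset (ℕ → ℝ), (∀ h ∈ hs, Tendsto h atTop (nhds 0)) →
  ∃ (Y : ℕ → Fin m → ℝ) (Hs : ℕ → Finset ℕ),
    (∀ n j, 0 < Y n j) ∧ (∀ n j, Y n j ≤ δ * (1/2)^(n+1)) ∧
    (∀ n, (Hs n).Nonempty) ∧
    (∀ n n', n < n' → ∀ t ∈ Hs n, ∀ t' ∈ Hs n', t < t') ∧
    (∀ h ∈ hs, ∀ n, |∑ t ∈ Hs n, h t| ≤ ε * (1/2)^(n+1)) ∧
    (∀ G ∈ Gs, ∀ i, ∀ n, |∑ t ∈ Hs n, G t i| ≤ ε * (1/2)^(n+1)) ∧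
    (∀ F : Finset ℕ, F.Nonempty → ∀ G ∈ Gs, ∀ i,
      Matrix.mulVec B (∑ n ∈ F, Y n) i + ∑ t ∈ F.biUnion Hs, G t i ∈ A)

theorem IT_of_SS {m : ℕ} (hSS : SSstmt m) : ITstmt m := by
  intro ι inst B hB p hidem hp0 hpJ A hA δ ε hδ hε Gs hGs hs hhs
  set Astar := star p A with hAstar
  have hstep := IT_step hSS B hB hidem hp0 hpJ hA hδ hε Gs hGs hs hhs
  -- build the sequence of states
  set StT := (ℕ → Fin m → ℝ) × (ℕ → Finset ℕ) with hStT
  have base : {s : StT // ITInv B Astar δ ε Gs hs 0 s.1 s.2} := by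
    refine ⟨(fun _ _ => 1, fun _ => {0}), ?_, ?_, ?_, ?_, ?_, ?_⟩
    · intro k hk; omega
    · intro k hk; omega
    · intro k k' h1 h2; omega
    · intro k hk; omega
    · intro k hk; omega
    · intro F hF hsub G hG i
      obtain ⟨k, hk⟩ := hF
      have := hsub k hk
      omega
  set step : ∀ n : ℕ, {s : StT // ITInv B Astar δ ε Gs hs n s.1 s.2} →
      {s : StT // ITInv B Astar δ ε Gs hs (n+1) s.1 s.2} := fun n s =>
    ⟨(Function.update s.1.1 n (Classical.choose (hstep n s.1.1 s.1.2 s.2)),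
      Function.update s.1.2 n (Classical.choose (Classical.choose_spec (hstep n s.1.1 s.1.2 s.2)))),
     Classical.choose_spec (Classical.choose_spec (hstep n s.1.1 s.1.2 s.2))⟩ with hstepdef
  set S : ∀ n : ℕ, {s : StT // ITInv B Astar δ ε Gs hs n s.1 s.2} :=
    fun n => Nat.rec base step n with hSdef
  set Yg : ℕ → Fin m → ℝ := fun k => (S (k+1)).1.1 k with hYg
  set Hg : ℕ → Finset ℕ := fun k => (S (k+1)).1.2 k with hHg
  have hS1 : ∀ n, (S (n+1)).1.1 = Function.update (S n).1.1 n
      (Classical.choose (hstep n (S n).1.1 (S n).1.2 (S n).2)) := fun n => rfl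
  have hS2 : ∀ n, (S (n+1)).1.2 = Function.update (S n).1.2 n
      (Classical.choose (Classical.choose_spec (hstep n (S n).1.1 (S n).1.2 (S n).2))) :=
    fun n => rfl
  -- agreement
  -- agreement
  have hagree : ∀ n k, k < n → (S n).1.1 k = Yg k ∧ (S n).1.2 k = Hg k := by
    intro n
    induction n with
    | zero => intro k hk; omega
    | succ n ih =>
      intro k hk
      rcases Nat.lt_succ_iff_lt_or_eq.mp hk with hk | rfl
      · rw [hS1 n, hS2 n, Function.update_of_ne (by omega), Function.update_of_ne (by omega)]
        exact ih k hk
      · exact ⟨rfl, rfl⟩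
  -- final assembly
  refine ⟨Yg, Hg, ?_, ?_, ?_, ?_, ?_, ?_, ?_⟩
  · intro n j
    have h := (S (n+1)).2.1 n (by omega) j
    rw [(hagree (n+1) n (by omega)).1] at h
    exact h.1
  · intro n j
    have h := (S (n+1)).2.1 n (by omega) j
    rw [(hagree (n+1) n (by omega)).1] at h
    exact h.2
  · intro n
    have h := (S (n+1)).2.2.1 n (by omega)
    rwa [(hagree (n+1) n (by omega)).2] at h
  · intro n n' hnn' t ht t' ht'
    have h := (S (n'+1)).2.2.2.1 n n' hnn' (by omega)
    rw [(hagree (n'+1) n (by omega)).2, (hagree (n'+1) n' (by omega)).2] at h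
    exact h t ht t' ht'
  · intro h hh n
    have h2 := (S (n+1)).2.2.2.2.1 n (by omega) h hh
    rwa [(hagree (n+1) n (by omega)).2] at h2
  · intro G hG i n
    have h2 := (S (n+1)).2.2.2.2.2.1 n (by omega) G hG i
    rwa [(hagree (n+1) n (by omega)).2] at h2
  · intro F hFne G hG i
    set nn := F.max' hFne + 1 with hnn
    have hFsub : ∀ k ∈ F, k < nn := by
      intro k hk
      have := F.le_max' k hk
      omega
    have h := (S nn).2.2.2.2.2.2 F hFne hFsub G hG i
    have h1 : (∑ k ∈ F, (S nn).1.1 k) = ∑ k ∈ F, Yg k := by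
      apply Finset.sum_congr rfl
      intro k hk
      exact (hagree nn k (hFsub k hk)).1
    have h2 : F.biUnion (S nn).1.2 = F.biUnion Hg := by
      apply Finset.biUnion_congr rfl
      intro k hk
      exact (hagree nn k (hFsub k hk)).2
    rw [h1, h2] at h
    exact star_subset h

theorem sum_pow_half_le (F : Finset ℕ) : (∑ n ∈ F, ((1:ℝ)/2)^n) ≤ 2 := by
  have hsub : F ⊆ Finset.range (F.sup id + 1) := by
    intro t ht
    have := Finset.le_sup (f := id) ht
    simp only [id] at this
    exact Finset.mem_range.mpr (by omega)
  calc (∑ n ∈ F, ((1:ℝ)/2)^n) ≤ ∑ n ∈ Finset.range (F.sup id + 1), ((1:ℝ)/2)^n :=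
        Finset.sum_le_sum_of_subset_of_nonneg hsub (fun t _ _ => by positivity)
    _ ≤ 2 := sum_geometric_two_le _

theorem sum_pow_half_succ_le (F : Finset ℕ) : (∑ n ∈ F, ((1:ℝ)/2)^(n+1)) ≤ 1 := by
  have h : ∀ n : ℕ, ((1:ℝ)/2)^(n+1) = (1/2) * (1/2)^n := fun n => by ring
  simp only [h]
  rw [← Finset.mul_sum]
  have := sum_pow_half_le F
  linarith

theorem tendsto_pow_half_succ : Tendsto (fun n : ℕ => ((1:ℝ)/2)^(n+1)) atTop (nhds 0) := by
  have h : ∀ n : ℕ, ((1:ℝ)/2)^(n+1) = (1/2) * (1/2)^n := fun n => by ring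
  simp only [h]
  have := tendsto_pow_atTop_nhds_zero_of_lt_one (by norm_num : (0:ℝ) ≤ 1/2) (by norm_num)
  simpa using this.const_mul ((1:ℝ)/2)

theorem SS_zero : SSstmt 0 := by
  intro ι inst B hB p hidem hp0 hpJ A hA δ ε hδ hε Gs hGs hs hhs
  rcases isEmpty_or_nonempty ι with hι | hι
  · have hev : ∀ᶠ t in atTop, ∀ h ∈ hs, |h t| < ε := by
      rw [eventually_all_finset]
      intro h hh
      have h2 : Set.Ioo (-ε) ε ∈ nhds (0:ℝ) := Ioo_mem_nhds (by linarith) hε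
      filter_upwards [(hhs h hh) h2] with t ht
      rw [abs_lt]
      exact ⟨ht.1, ht.2⟩
    obtain ⟨T, hT⟩ := hev.exists
    refine ⟨fun j => j.elim0, fun j => j.elim0, {T}, ⟨T, Finset.mem_singleton_self T⟩, ?_, ?_⟩
    · intro G hG i
      exact (hι.false i).elim
    · intro h hh
      rw [Finset.sum_singleton]
      exact hT h hh
  · obtain ⟨i⟩ := hι
    obtain ⟨j, _⟩ := hB.1 i
    exact j.elim0

set_option maxHeartbeats 2000000 in
theorem SS_succ {m : ℕ} (hSSm : SSstmt m) (hITm : ITstmt m) : SSstmt (m+1) := by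
  intro ι inst B hB p hidem hp0 hpJ A hA δ ε hδ hε Gs hGs hs hhs
  by_cases hcol : ∀ i, B i 0 = 0
  · -- the first column vanishes
    set B' : Matrix ι (Fin m) ℝ := Matrix.of (fun i j => B i j.succ) with hB'
    have hFE' : FE B' := by
      refine ⟨?_, ?_, ?_⟩
      · intro i
        obtain ⟨j, hj⟩ := hB.1 i
        rcases Fin.eq_zero_or_eq_succ j with rfl | ⟨j', rfl⟩
        · exact absurd (hcol i) hj
        · exact ⟨j', hj⟩
      · intro i j hzero hne
        refine hB.2.1 i j.succ ?_ hne
        intro k hk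
        rcases Fin.eq_zero_or_eq_succ k with rfl | ⟨k', rfl⟩
        · exact hcol i
        · exact hzero k' (by rwa [Fin.succ_lt_succ_iff] at hk)
      · intro i i' j h0 h0' hne hne'
        refine hB.2.2 i i' j.succ ?_ ?_ hne hne'
        · intro k hk
          rcases Fin.eq_zero_or_eq_succ k with rfl | ⟨k', rfl⟩
          · exact hcol i
          · exact h0 k' (by rwa [Fin.succ_lt_succ_iff] at hk)
        · intro k hk
          rcases Fin.eq_zero_or_eq_succ k with rfl | ⟨k', rfl⟩
          · exact hcol i'
          · exact h0' k' (by rwa [Fin.succ_lt_succ_iff] at hk)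
    obtain ⟨y', hy', H, hHne, hGmem, haux⟩ :=
      hSSm ι inst B' hFE' p hidem hp0 hpJ A hA δ ε hδ hε Gs hGs hs hhs
    refine ⟨Fin.cons (δ/2) y', ?_, H, hHne, ?_, haux⟩
    · intro j
      rcases Fin.eq_zero_or_eq_succ j with rfl | ⟨j', rfl⟩
      · rw [Fin.cons_zero]
        constructor <;> [linarith; linarith]
      · rw [Fin.cons_succ]
        exact hy' j'
    · intro G hG i
      have hmv : Matrix.mulVec B (Fin.cons (δ/2) y') i = Matrix.mulVec B' y' i := by
        rw [mulVec_apply, mulVec_apply, Fin.sum_univ_succ, Fin.cons_zero, hcol i, zero_mul,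
          zero_add]
        apply Finset.sum_congr rfl
        intro j' _
        rw [Fin.cons_succ]
        rfl
      rw [hmv]
      exact hGmem G hG i
  · -- there is a nonzero first column entry
    push_neg at hcol
    obtain ⟨i₁, hi₁⟩ := hcol
    set c : ℝ := B i₁ 0 with hcdef
    have hvac : ∀ (i : ι) (k : Fin (m+1)), k < 0 → B i k = 0 := by
      intro i k hk
      exact absurd hk (Fin.not_lt_zero k)
    have hc : 0 < c := hB.2.1 i₁ 0 (hvac i₁) hi₁
    have hsame : ∀ i, B i 0 ≠ 0 → B i 0 = c := by
      intro i hne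
      exact hB.2.2 i i₁ 0 (hvac i) (hvac i₁) hne hi₁
    -- submatrix over the rows with vanishing first entry
    set ι₀ := {i : ι // B i 0 = 0} with hι₀
    set B₀ : Matrix ι₀ (Fin m) ℝ := Matrix.of (fun i j => B i.1 j.succ) with hB₀
    have hFE₀ : FE B₀ := by
      refine ⟨?_, ?_, ?_⟩
      · intro i
        obtain ⟨j, hj⟩ := hB.1 i.1
        rcases Fin.eq_zero_or_eq_succ j with rfl | ⟨j', rfl⟩
        · exact absurd i.2 hj
        · exact ⟨j', hj⟩
      · intro i j hzero hne
        refine hB.2.1 i.1 j.succ ?_ hne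
        intro k hk
        rcases Fin.eq_zero_or_eq_succ k with rfl | ⟨k', rfl⟩
        · exact i.2
        · exact hzero k' (by rwa [Fin.succ_lt_succ_iff] at hk)
      · intro i i' j h0 h0' hne hne'
        refine hB.2.2 i.1 i'.1 j.succ ?_ ?_ hne hne'
        · intro k hk
          rcases Fin.eq_zero_or_eq_succ k with rfl | ⟨k', rfl⟩
          · exact i.2
          · exact h0 k' (by rwa [Fin.succ_lt_succ_iff] at hk)
        · intro k hk
          rcases Fin.eq_zero_or_eq_succ k with rfl | ⟨k', rfl⟩
          · exact i'.2
          · exact h0' k' (by rwa [Fin.succ_lt_succ_iff] at hk)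
    -- apply the iterated statement to B₀
    have hAIoo : A ∩ Set.Ioo 0 ε ∈ p := Filter.inter_mem hA (hp0 ε hε)
    set Gs₀ : Finset (ℕ → ι₀ → ℝ) := Gs.image (fun G => fun t (i : ι₀) => G t i.1) with hGs₀
    have hGs₀null : ∀ G ∈ Gs₀, ∀ i, Tendsto (fun t => G t i) atTop (nhds 0) := by
      intro G hG i
      obtain ⟨G₀, hG₀, rfl⟩ := Finset.mem_image.mp hG
      exact hGs G₀ hG₀ i.1
    set hsIT : Finset (ℕ → ℝ) := hs ∪
      (Gs ×ˢ (Finset.univ : Finset ι)).image (fun q => fun t => q.1 t q.2) with hhsIT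
    have hhsITnull : ∀ h ∈ hsIT, Tendsto h atTop (nhds 0) := by
      intro h hh
      rcases Finset.mem_union.mp hh with hh | hh
      · exact hhs h hh
      · obtain ⟨q, hq, rfl⟩ := Finset.mem_image.mp hh
        simp only [Finset.mem_product] at hq
        exact hGs q.1 hq.1 q.2
    obtain ⟨Y, Hs, hY1, hY2, hHne, hHinc, hITaux, _, hFmem⟩ :=
      hITm ι₀ inferInstance B₀ hFE₀ p hidem hp0 hpJ (A ∩ Set.Ioo 0 ε) hAIoo (δ/2) 1
        (by linarith) one_pos Gs₀ hGs₀null hsIT hhsITnull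
    -- the scalar sequences fed to L0
    set Zf : (ℕ → ι → ℝ) × ι → (ℕ → ℝ) := fun q => fun nn =>
      (∑ j' : Fin m, B q.2 j'.succ * Y nn j') + ∑ t ∈ Hs nn, q.1 t q.2 with hZf
    set gsL0 : Finset (ℕ → ℝ) :=
      ((Gs ×ˢ (Finset.univ : Finset ι)).filter (fun q => B q.2 0 ≠ 0)).image Zf ∪
      hs.image (fun h => fun nn => ∑ t ∈ Hs nn, h t) with hgsL0
    have hblocknull : ∀ h ∈ hsIT, Tendsto (fun nn => ∑ t ∈ Hs nn, h t) atTop (nhds 0) := by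
      intro h hh
      apply squeeze_zero_norm (fun nn => ?_) tendsto_pow_half_succ
      rw [Real.norm_eq_abs]
      have := hITaux h hh nn
      simpa using this
    have hgsL0null : ∀ g ∈ gsL0, Tendsto g atTop (nhds 0) := by
      intro g hg
      rcases Finset.mem_union.mp hg with hg | hg
      · obtain ⟨q, hq, rfl⟩ := Finset.mem_image.mp hg
        simp only [Finset.mem_filter, Finset.mem_product] at hq
        have h1 : Tendsto (fun nn => ∑ j' : Fin m, B q.2 j'.succ * Y nn j') atTop (nhds 0) := by
          have hb : ∀ nn, ‖∑ j' : Fin m, B q.2 j'.succ * Y nn j'‖ ≤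
              ((∑ j' : Fin m, |B q.2 j'.succ|) * (δ/2)) * ((1:ℝ)/2)^(nn+1) := by
            intro nn
            rw [Real.norm_eq_abs]
            calc |∑ j' : Fin m, B q.2 j'.succ * Y nn j'|
                ≤ ∑ j' : Fin m, |B q.2 j'.succ * Y nn j'| := Finset.abs_sum_le_sum_abs _ _
              _ ≤ ∑ j' : Fin m, |B q.2 j'.succ| * ((δ/2) * ((1:ℝ)/2)^(nn+1)) := by
                  apply Finset.sum_le_sum
                  intro j' _
                  rw [abs_mul]
                  apply mul_le_mul_of_nonneg_left ?_ (abs_nonneg _)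
                  rw [abs_of_pos (hY1 nn j')]
                  exact hY2 nn j'
              _ = ((∑ j' : Fin m, |B q.2 j'.succ|) * (δ/2)) * ((1:ℝ)/2)^(nn+1) := by
                  rw [← Finset.sum_mul]
                  ring
          apply squeeze_zero_norm hb
          have := tendsto_pow_half_succ.const_mul ((∑ j' : Fin m, |B q.2 j'.succ|) * (δ/2))
          simpa using this
        have hsc : (fun t : ℕ => q.1 t q.2) ∈ hsIT := by
          apply Finset.mem_union_right
          exact Finset.mem_image.mpr ⟨q, Finset.mem_product.mpr ⟨hq.1.1, Finset.mem_univ _⟩, rfl⟩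
        have h2 := hblocknull _ hsc
        have := h1.add h2
        simpa [hZf] using this
      · obtain ⟨h, hh, rfl⟩ := Finset.mem_image.mp hg
        exact hblocknull h (Finset.mem_union_left _ hh)
    -- L0
    set ε₀ : ℝ := min ε (c * δ / 2) with hε₀def
    have hε₀ : 0 < ε₀ := lt_min hε (div_pos (mul_pos hc hδ) two_pos)
    obtain ⟨a, ha, F, hFne, hL0mem⟩ := L0 hp0 hpJ hA hε₀ gsL0 hgsL0null
    have haA : a ∈ A := ha.1
    have ha0 : 0 < a := ha.2.1
    have haε : a < ε₀ := ha.2.2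
    -- disjointness and splitting
    have hdisj : (↑F : Set ℕ).PairwiseDisjoint Hs := by
      intro a1 h1 b1 h2 hne12
      simp only [Function.onFun]
      rcases lt_or_gt_of_ne hne12 with h | h
      · rw [Finset.disjoint_left]
        intro t ht1 ht2
        have := hHinc a1 b1 h t ht1 t ht2
        omega
      · rw [Finset.disjoint_left]
        intro t ht1 ht2
        have := hHinc b1 a1 h t ht2 t ht1
        omega
    have hsplit : ∀ g : ℕ → ℝ, (∑ t ∈ F.biUnion Hs, g t) = ∑ nn ∈ F, ∑ t ∈ Hs nn, g t :=
      fun g => Finset.sum_biUnion hdisj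
    -- assembly
    set yhat : Fin m → ℝ := ∑ nn ∈ F, Y nn with hyhat
    have hyhatval : ∀ j', yhat j' = ∑ nn ∈ F, Y nn j' := fun j' => by
      rw [hyhat, Finset.sum_apply]
    refine ⟨Fin.cons (a/c) yhat, ?_, F.biUnion Hs, ?_, ?_, ?_⟩
    · intro j
      rcases Fin.eq_zero_or_eq_succ j with rfl | ⟨j', rfl⟩
      · rw [Fin.cons_zero]
        refine ⟨by positivity, ?_⟩
        have h1 : a < c * δ / 2 := lt_of_lt_of_le haε (min_le_right _ _)
        rw [div_lt_iff₀ hc]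
        nlinarith
      · rw [Fin.cons_succ, hyhatval j']
        constructor
        · exact Finset.sum_pos (fun nn _ => hY1 nn j') hFne
        · have h1 : ∑ nn ∈ F, Y nn j' ≤ ∑ nn ∈ F, (δ/2) * ((1:ℝ)/2)^(nn+1) :=
            Finset.sum_le_sum (fun nn _ => hY2 nn j')
          have h2 : (∑ nn ∈ F, (δ/2) * ((1:ℝ)/2)^(nn+1))
              = (δ/2) * ∑ nn ∈ F, ((1:ℝ)/2)^(nn+1) := by
            rw [Finset.mul_sum]
          have h3 := sum_pow_half_succ_le F
          nlinarith
    · obtain ⟨n0, hn0⟩ := hFne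
      obtain ⟨t, ht⟩ := hHne n0
      exact ⟨t, Finset.mem_biUnion.mpr ⟨n0, hn0, ht⟩⟩
    · intro G hG i
      by_cases hB0 : B i 0 = 0
      · have hmv : Matrix.mulVec B (Fin.cons (a/c) yhat) i = Matrix.mulVec B₀ yhat ⟨i, hB0⟩ := by
          rw [mulVec_apply, mulVec_apply, Fin.sum_univ_succ, Fin.cons_zero, hB0, zero_mul,
            zero_add]
          apply Finset.sum_congr rfl
          intro j' _
          rw [Fin.cons_succ]
          rfl
        rw [hmv]
        have h := hFmem F hFne (fun t (i0 : ι₀) => G t i0.1)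
          (Finset.mem_image_of_mem _ hG) ⟨i, hB0⟩
        exact h
      · have hBc : B i 0 = c := hsame i hB0
        have hZmem : Zf (G, i) ∈ gsL0 := by
          apply Finset.mem_union_left
          apply Finset.mem_image_of_mem
          simp only [Finset.mem_filter, Finset.mem_product]
          exact ⟨⟨hG, Finset.mem_univ i⟩, hB0⟩
        have h := hL0mem _ hZmem
        have hmv : Matrix.mulVec B (Fin.cons (a/c) yhat) i + ∑ t ∈ F.biUnion Hs, G t i
            = a + ∑ nn ∈ F, Zf (G, i) nn := by
          rw [mulVec_apply, Fin.sum_univ_succ, Fin.cons_zero, hBc, hsplit (fun t => G t i)]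
          have hca : c * (a / c) = a := by field_simp
          rw [hca]
          have hswap : (∑ j' : Fin m, B i j'.succ * (Fin.cons (a/c) yhat : Fin (m+1) → ℝ) j'.succ)
              = ∑ nn ∈ F, ∑ j' : Fin m, B i j'.succ * Y nn j' := by
            simp only [Fin.cons_succ]
            calc (∑ j' : Fin m, B i j'.succ * yhat j')
                = ∑ j' : Fin m, ∑ nn ∈ F, B i j'.succ * Y nn j' := by
                  apply Finset.sum_congr rfl
                  intro j' _
                  rw [hyhatval j', Finset.mul_sum]
              _ = ∑ nn ∈ F, ∑ j' : Fin m, B i j'.succ * Y nn j' := Finset.sum_comm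
          rw [hswap]
          simp only [hZf]
          rw [Finset.sum_add_distrib]
          ring
        rw [hmv]
        have hsub2 : A ∩ Set.Ioo 0 ε₀ ⊆ A ∩ Set.Ioo 0 ε := by
          intro z hz
          exact ⟨hz.1, hz.2.1, lt_of_lt_of_le hz.2.2 (min_le_left _ _)⟩
        exact hsub2 h
    · intro h hh
      have hmemg : (fun nn => ∑ t ∈ Hs nn, h t) ∈ gsL0 :=
        Finset.mem_union_right _ (Finset.mem_image_of_mem _ hh)
      have h1 := hL0mem _ hmemg
      rw [hsplit h]
      have h2 : 0 < a + ∑ nn ∈ F, ∑ t ∈ Hs nn, h t := h1.2.1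
      have h3 : a + (∑ nn ∈ F, ∑ t ∈ Hs nn, h t) < ε₀ := h1.2.2
      have h4 : ε₀ ≤ ε := min_le_left _ _
      rw [abs_lt]
      constructor <;> linarith

theorem SSIT : ∀ m, SSstmt m ∧ ITstmt m := by
  intro m
  induction m using Nat.strong_induction_on with
  | _ m IH =>
    have hSS : SSstmt m := by
      cases m with
      | zero => exact SS_zero
      | succ m' =>
        have h := IH m' (by omega)
        exact SS_succ h.1 h.2
    exact ⟨hSS, IT_of_SS hSS⟩



theorem part3 {u v : ℕ} {M : Matrix (Fin u) (Fin v) ℝ} (hM : IPR u v M)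
    {C : Set ℝ} {p : Ultrafilter ℝ} (hidem : p + p = p)
    (hp0 : ∀ ε : ℝ, 0 < ε → Set.Ioo 0 ε ∈ p) (hCp : C ∈ p)
    (hpJ : ∀ A ∈ p, JSetNearZero A) :
    JSetNearZeroV v {x : Fin v → ℝ | (∀ j, 0 < x j) ∧ ∀ i, M.mulVec x i ∈ C} := by
  intro F hF δ hδ
  -- positive image point
  obtain ⟨x₀, hx₀pos, hMx₀pos, -⟩ := hM 1 one_pos (fun _ => (0 : Fin 1))
  -- first entries matrix
  obtain ⟨m, G, hG0, hFEB⟩ := ipr_fe hM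
  -- constants
  set KG : ℝ := (∑ j, ∑ k, G j k) + 1 with hKG
  have hKGpos : 0 < KG := by
    have : (0:ℝ) ≤ ∑ j, ∑ k, G j k :=
      Finset.sum_nonneg fun j _ => Finset.sum_nonneg fun k _ => hG0 j k
    simp only [hKG]; linarith
  have hKGrow : ∀ j, (∑ k, G j k) ≤ KG := by
    intro j
    have h1 : (∑ k, G j k) ≤ ∑ j', ∑ k, G j' k :=
      Finset.single_le_sum (f := fun j' => ∑ k, G j' k)
        (fun j' _ => Finset.sum_nonneg fun k _ => hG0 j' k) (Finset.mem_univ j)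
    simp only [hKG]; linarith
  set Sx : ℝ := (∑ j, x₀ j) + 1 with hSx
  have hSxpos : 0 < Sx := by
    have : (0:ℝ) ≤ ∑ j, x₀ j := Finset.sum_nonneg fun j _ => (hx₀pos j).le
    simp only [hSx]; linarith
  have hSxj : ∀ j, x₀ j ≤ Sx := by
    intro j
    have h1 : x₀ j ≤ ∑ j', x₀ j' :=
      Finset.single_le_sum (fun j' _ => (hx₀pos j').le) (Finset.mem_univ j)
    simp only [hSx]; linarith
  set η : ℝ := δ / (8 * Sx) with hη
  have hηpos : 0 < η := by positivity
  set δ' : ℝ := δ / (4 * KG) with hδ'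
  have hδ'pos : 0 < δ' := by positivity
  clear_value KG Sx η δ'
  -- sequences
  set Gseq : (ℕ → Fin v → ℝ) → (ℕ → Fin u → ℝ) := fun f => fun t i =>
    M.mulVec (f t) i + η * ((1:ℝ)/2)^t * M.mulVec x₀ i with hGseq
  set Gs : Finset (ℕ → Fin u → ℝ) := F.image Gseq with hGs
  have hGsnull : ∀ Gg ∈ Gs, ∀ i, Tendsto (fun t => Gg t i) atTop (nhds 0) := by
    intro Gg hGg i
    obtain ⟨f, hf, rfl⟩ := Finset.mem_image.mp hGg
    have h1 : Tendsto (fun t => M.mulVec (f t) i) atTop (nhds 0) := by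
      have h2 : ∀ t, M.mulVec (f t) i = ∑ j, M i j * f t j := fun t => mulVec_apply M (f t) i
      simp only [h2]
      have h3 := tendsto_finset_sum (Finset.univ : Finset (Fin v))
        (fun j _ => ((hF f hf).2 j).const_mul (M i j))
      simpa using h3
    have h2 : Tendsto (fun t : ℕ => η * ((1:ℝ)/2)^t * M.mulVec x₀ i) atTop (nhds 0) := by
      have h3 := tendsto_pow_atTop_nhds_zero_of_lt_one (by norm_num : (0:ℝ) ≤ 1/2) (by norm_num)
      have h4 := (h3.const_mul η).mul_const (M.mulVec x₀ i)
      simpa [mul_assoc] using h4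
    have := h1.add h2
    simpa [hGseq] using this
  -- main call
  obtain ⟨y, hy, H, hHne, hGmem, -⟩ := (SSIT m).1 (Fin u) inferInstance (M * G) hFEB p hidem hp0 hpJ
    C hCp δ' 1 hδ'pos one_pos Gs hGsnull ∅ (by intro h hh; exact absurd hh (Finset.notMem_empty h))
  set s : ℝ := ∑ t ∈ H, η * ((1:ℝ)/2)^t with hs
  have hspos : 0 < s :=
    Finset.sum_pos (fun t _ => by positivity) hHne
  have hsle : s ≤ 2 * η := by
    have h1 : s = η * ∑ t ∈ H, ((1:ℝ)/2)^t := by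
      rw [hs, Finset.mul_sum]
    have h2 := sum_pow_half_le H
    have := mul_le_mul_of_nonneg_left h2 hηpos.le
    rw [h1]
    linarith
  clear_value s
  set a : Fin v → ℝ := G.mulVec y + s • x₀ with ha
  have haval : ∀ j, a j = G.mulVec y j + s * x₀ j := fun j => rfl
  have hGy0 : ∀ j, 0 ≤ G.mulVec y j := by
    intro j
    rw [mulVec_apply]
    exact Finset.sum_nonneg fun k _ => mul_nonneg (hG0 j k) (hy k).1.le
  have hGyle : ∀ j, G.mulVec y j ≤ δ/4 := by
    intro j
    rw [mulVec_apply]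
    have h1 : (∑ k, G j k * y k) ≤ ∑ k, G j k * δ' :=
      Finset.sum_le_sum fun k _ => mul_le_mul_of_nonneg_left (hy k).2.le (hG0 j k)
    have h2 : (∑ k, G j k * δ') = (∑ k, G j k) * δ' := by rw [Finset.sum_mul]
    have h3 : (∑ k, G j k) * δ' ≤ KG * δ' :=
      mul_le_mul_of_nonneg_right (hKGrow j) hδ'pos.le
    have h4 : KG * δ' = δ/4 := by
      rw [hδ']
      field_simp
    linarith
  refine ⟨a, ?_, H, hHne, ?_⟩
  · intro j
    constructor
    · rw [haval]
      have := hGy0 j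
      have := hx₀pos j
      nlinarith
    · rw [haval]
      have h1 := hGyle j
      have h2 : s * x₀ j ≤ 2 * η * Sx := by
        have := hSxj j
        have := hx₀pos j
        nlinarith
      have h3 : 2 * η * Sx = δ/4 := by
        rw [hη]
        field_simp
        ring
      linarith
  · intro f hf
    constructor
    · intro j
      show 0 < a j + (∑ t ∈ H, f t) j
      rw [Finset.sum_apply]
      have h1 : 0 < a j := by
        rw [haval]
        have := hGy0 j
        have := hx₀pos j
        nlinarith
      have h2 : 0 ≤ ∑ t ∈ H, f t j :=
        Finset.sum_nonneg fun t _ => ((hF f hf).1 t j).le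
      linarith
    · intro i
      have hkey : M.mulVec (a + ∑ t ∈ H, f t) i
          = (M * G).mulVec y i + ∑ t ∈ H, Gseq f t i := by
        rw [Matrix.mulVec_add, Pi.add_apply]
        have e1 : M.mulVec a i = (M * G).mulVec y i + s * M.mulVec x₀ i := by
          rw [ha, Matrix.mulVec_add, Pi.add_apply, Matrix.mulVec_smul, Pi.smul_apply,
            smul_eq_mul, Matrix.mulVec_mulVec]
        have e2 : M.mulVec (∑ t ∈ H, f t) i = ∑ t ∈ H, M.mulVec (f t) i := by
          rw [mulVec_apply]
          have : ∀ j, (∑ t ∈ H, f t) j = ∑ t ∈ H, f t j := fun j => Finset.sum_apply _ _ _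
          calc (∑ j, M i j * (∑ t ∈ H, f t) j) = ∑ j, ∑ t ∈ H, M i j * f t j := by
                apply Finset.sum_congr rfl
                intro j _
                rw [this j, Finset.mul_sum]
            _ = ∑ t ∈ H, ∑ j, M i j * f t j := Finset.sum_comm
            _ = ∑ t ∈ H, M.mulVec (f t) i := by
                apply Finset.sum_congr rfl
                intro t _
                rw [mulVec_apply]
        rw [e1, e2]
        have e3 : s * M.mulVec x₀ i = ∑ t ∈ H, η * ((1:ℝ)/2)^t * M.mulVec x₀ i := by
          rw [hs, Finset.sum_mul]
        rw [e3]
        simp only [hGseq]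
        rw [Finset.sum_add_distrib]
        ring
      rw [hkey]
      have := hGmem (Gseq f) (Finset.mem_image_of_mem _ hf) i
      exact this.1
end
end CJ

/-- C-sets near zero are J-sets near zero, every member of a witnessing
idempotent is a J-set near zero, and preimages of C-sets near zero under IPR matrices are
J-sets near zero. -/
theorem cSet_jSet_preimage :
    (∀ C : Set ℝ, CSetNearZero C → JSetNearZero C) ∧
    (∀ (C : Set ℝ) (p : Ultrafilter ℝ), p + p = p → (∀ ε : ℝ, 0 < ε → Set.Ioo 0 ε ∈ p) →
      C ∈ p → (∀ A ∈ p, JSetNearZero A) → ∀ A ∈ p, JSetNearZero A) ∧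
    (∀ u v : ℕ, ∀ M : Matrix (Fin u) (Fin v) ℝ, IPR u v M →
      ∀ C : Set ℝ, C ⊆ Set.Ioi 0 → CSetNearZero C →
        JSetNearZeroV v {x : Fin v → ℝ | (∀ j, 0 < x j) ∧ ∀ i, M.mulVec x i ∈ C}) := by
  refine ⟨?_, ?_, ?_⟩
  · intro C hC
    obtain ⟨p, hidem, hp0, hCp, hpJ⟩ := hC
    exact hpJ C hCp
  · intro C p hidem hp0 hCp hpJ A hA
    exact hpJ A hA
  · intro u v M hM C hsub hC
    obtain ⟨p, hidem, hp0, hCp, hpJ⟩ := hC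
    exact CJ.part3 hM hidem hp0 hCp hpJ
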